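/- arXiv:2109.00726 — 4 statements merged into one kernel-verified Lean document; each statement's English description precedes it below -/
import Mathlib

section
/- Let (R, m) be a Noetherian local ring, M a finitely generated R-module, and let I and J be ideals of R. Then there exists a positive integer k such that for all n ≥ 1, the submodule (I^{n+k}M :_M J) equals I^n • (I^k M :_M J) + (0 :_M J). -/
open IsLocalRing Submodule

/-- The colon submodule `(N :_M J) = {x ∈ M ∣ J x ⊆ N}`. -/
def Submodule.colonBy {R M : Type*} [CommRing R] [AddCommGroup M] [Module R M]
    (N : Submodule R M) (J : Ideal R) : Submodule R M where
  carrier := {x | ∀ r ∈ J, r • x ∈ N}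
  add_mem' := fun {a b} ha hb r hr => by
    rw [smul_add]; exact N.add_mem (ha r hr) (hb r hr)
  zero_mem' := fun r hr => by rw [smul_zero]; exact N.zero_mem
  smul_mem' := fun c {x} hx r hr => by
    rw [smul_comm]; exact N.smul_mem c (hx r hr)

/-- The length of a module: the height of `⊤` in its lattice of submodules. -/
noncomputable def moduleLength (R M : Type*) [Ring R] [AddCommGroup M] [Module R M] : ℕ∞ :=
  Order.height (⊤ : Submodule R M)

lemma mem_colonBy_of_gen {R M : Type*} [CommRing R] [AddCommGroup M] [Module R M]
    {N : Submodule R M} {J : Ideal R} {S : Finset R} (hS : Ideal.span (S : Set R) = J)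
    {x : M} (h : ∀ a ∈ S, a • x ∈ N) : x ∈ N.colonBy J := by
  intro r hr
  rw [← hS] at hr
  induction hr using Submodule.span_induction with
  | mem a ha => exact h a ha
  | zero => simp
  | add a b _ _ ha hb => rw [add_smul]; exact N.add_mem ha hb
  | smul c a _ ha => rw [smul_eq_mul, mul_smul]; exact N.smul_mem c ha

/-- membership in `I • ⊤` of a pi module given componentwise membership. -/
lemma pi_mem_smul_top {R M : Type*} [CommRing R] [AddCommGroup M] [Module R M]
    {ι : Type*} [Fintype ι] (I : Ideal R) (f : ι → M)
    (h : ∀ i, f i ∈ (I • ⊤ : Submodule R M)) :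
    f ∈ (I • ⊤ : Submodule R (ι → M)) := by
  classical
  rw [← Finset.univ_sum_single f]
  refine Submodule.sum_mem _ fun i _ => ?_
  have : Pi.single i (f i) = LinearMap.single R (fun _ : ι => M) i (f i) := rfl
  rw [this]
  have hmap : ((I • ⊤ : Submodule R M).map (LinearMap.single R (fun _ : ι => M) i))
      ≤ (I • ⊤ : Submodule R (ι → M)) := by
    rw [Submodule.map_smul'']
    exact Submodule.smul_mono le_rfl le_top
  exact hmap ⟨f i, h i, rfl⟩

lemma pi_smul_top_mem {R M : Type*} [CommRing R] [AddCommGroup M] [Module R M]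
    {ι : Type*} (I : Ideal R) {f : ι → M}
    (h : f ∈ (I • ⊤ : Submodule R (ι → M))) (i : ι) :
    f i ∈ (I • ⊤ : Submodule R M) := by
  have hmap : ((I • ⊤ : Submodule R (ι → M)).map (LinearMap.proj i))
      ≤ (I • ⊤ : Submodule R M) := by
    rw [Submodule.map_smul'']
    exact Submodule.smul_mono le_rfl le_top
  exact hmap ⟨f, h, rfl⟩

section ULiftAR

universe u v

variable {R : Type u} {M : Type v} [CommRing R] [AddCommGroup M] [Module R M]

/-- Lift a submodule to the `ULift` world. -/
def subUp (P : Submodule R M) : Submodule (ULift.{v} R) (ULift.{u} M) where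
  carrier := {x | x.down ∈ P}
  add_mem' := fun {a b} ha hb => P.add_mem ha hb
  zero_mem' := P.zero_mem
  smul_mem' := fun c {x} hx => P.smul_mem c.down hx

@[simp] lemma mem_subUp {P : Submodule R M} {x : ULift.{u} M} :
    x ∈ subUp P ↔ x.down ∈ P := Iff.rfl

lemma subUp_injective : Function.Injective (subUp (R := R) (M := M)) := by
  intro P Q h
  ext x
  constructor
  · intro hx; exact (mem_subUp (P := Q)).1 (h ▸ (mem_subUp.2 hx : (ULift.up x) ∈ subUp P))
  · intro hx; exact (mem_subUp (P := P)).1 (h ▸ (mem_subUp.2 hx : (ULift.up x) ∈ subUp Q))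

lemma subUp_inf (P Q : Submodule R M) : subUp (P ⊓ Q) = subUp P ⊓ subUp Q := rfl

lemma subUp_top : subUp (⊤ : Submodule R M) = ⊤ := rfl

/-- The lifted ideal. -/
def idealUp (I : Ideal R) : Ideal (ULift.{v} R) := I.comap (ULift.ringEquiv.toRingHom)

@[simp] lemma mem_idealUp {I : Ideal R} {r : ULift.{v} R} : r ∈ idealUp I ↔ r.down ∈ I := Iff.rfl

lemma subUp_smul (I : Ideal R) (P : Submodule R M) :
    subUp (I • P) = idealUp.{u,v} I • subUp P := by
  apply le_antisymm
  · intro x hx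
    rw [mem_subUp] at hx
    have key : ∀ y ∈ I • P, ULift.up.{u} y ∈ idealUp.{u,v} I • subUp P := by
      intro y hy
      refine Submodule.smul_induction_on hy (fun r hr m hm => ?_) (fun a b ha hb => ?_)
      · have : (ULift.up.{u} (r • m)) = (ULift.up.{v} r) • (ULift.up.{u} m) := rfl
        rw [this]
        exact Submodule.smul_mem_smul (mem_idealUp.2 hr) (mem_subUp.2 hm)
      · have : (ULift.up.{u} (a + b)) = ULift.up a + ULift.up b := rfl
        rw [this]
        exact Submodule.add_mem _ ha hb
    have := key x.down hx
    simpa using this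
  · refine Submodule.smul_le.2 fun r hr m hm => ?_
    rw [mem_subUp]
    have : (r • m).down = r.down • m.down := rfl
    rw [this]
    exact Submodule.smul_mem_smul (mem_idealUp.1 hr) (mem_subUp.1 hm)

lemma subUp_pow_smul (I : Ideal R) (P : Submodule R M) (n : ℕ) :
    subUp (I ^ n • P) = (idealUp.{u,v} I) ^ n • subUp P := by
  induction n with
  | zero => simp [Ideal.one_eq_top, Submodule.top_smul]
  | succ n ih =>
    have h1 := mul_smul I (I ^ n) P
    have h2 := mul_smul (idealUp.{u,v} I) ((idealUp.{u,v} I) ^ n) (subUp P)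
    rw [pow_succ', h1, subUp_smul, ih, ← h2, ← pow_succ']

lemma uliftFinite [Module.Finite R M] :
    Module.Finite (ULift.{v} R) (ULift.{u} M) := by
  classical
  obtain ⟨s, hs⟩ := Module.Finite.fg_top (R := R) (M := M)
  constructor
  refine ⟨s.image ULift.up, ?_⟩
  rw [eq_top_iff]
  intro x _
  have hx : x.down ∈ Submodule.span R (s : Set M) := hs ▸ Submodule.mem_top
  have key : ∀ y ∈ Submodule.span R (s : Set M),
      ULift.up.{u} y ∈ Submodule.span (ULift.{v} R) ((s.image ULift.up : Finset (ULift.{u} M)) : Set (ULift.{u} M)) := by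
    intro y hy
    induction hy using Submodule.span_induction with
    | mem a ha =>
      exact Submodule.subset_span (Finset.mem_coe.2 (Finset.mem_image_of_mem _ ha))
    | zero => exact Submodule.zero_mem _
    | add a b _ _ ha hb =>
      have : (ULift.up.{u} (a + b)) = ULift.up a + ULift.up b := rfl
      rw [this]; exact Submodule.add_mem _ ha hb
    | smul c a _ ha =>
      have : (ULift.up.{u} (c • a)) = (ULift.up.{v} c) • ULift.up a := rfl
      rw [this]; exact Submodule.smul_mem _ _ ha
  exact key x.down hx

/-- Universe-polymorphic Artin–Rees lemma. -/
theorem exists_pow_inf_eq_pow_smul' [IsNoetherianRing R] [Module.Finite R M]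
    (I : Ideal R) (N : Submodule R M) :
    ∃ k : ℕ, ∀ n ≥ k, I ^ n • ⊤ ⊓ N = I ^ (n - k) • (I ^ k • ⊤ ⊓ N) := by
  haveI : IsNoetherianRing (ULift.{v} R) :=
    isNoetherianRing_of_ringEquiv R (ULift.ringEquiv.symm)
  haveI := uliftFinite.{u,v} (R := R) (M := M)
  obtain ⟨k, hk⟩ := Ideal.exists_pow_inf_eq_pow_smul (idealUp.{u,v} I) (subUp N)
  refine ⟨k, fun n hn => ?_⟩
  apply subUp_injective.{u,v}
  rw [subUp_inf, subUp_pow_smul, subUp_top, hk n hn, ← subUp_top, ← subUp_pow_smul,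
    ← subUp_inf, ← subUp_pow_smul]

end ULiftAR

/-- Lemma: there exists `k ≥ 1` with
`(I^{n+k}M :_M J) = I^n (I^k M :_M J) + (0 :_M J)` for all `n ≥ 1`. -/
theorem statement0 {R M : Type*} [CommRing R] [IsNoetherianRing R] [IsLocalRing R]
    [AddCommGroup M] [Module R M] [Module.Finite R M] (I J : Ideal R) :
    ∃ k : ℕ, 0 < k ∧ ∀ n : ℕ, 1 ≤ n →
      (I ^ (n + k) • ⊤ : Submodule R M).colonBy J
        = I ^ n • ((I ^ k • ⊤ : Submodule R M).colonBy J)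
          + (⊥ : Submodule R M).colonBy J := by
  classical
  obtain ⟨S, hS⟩ : J.FG := IsNoetherian.noetherian J
  let φ : M →ₗ[R] (S → M) := LinearMap.pi fun a => (a : R) • LinearMap.id
  have hφ_apply : ∀ (x : M) (a : S), φ x a = (a : R) • x := fun x a => rfl
  obtain ⟨k, hk⟩ := exists_pow_inf_eq_pow_smul' (M := S → M) I (LinearMap.range φ)
  refine ⟨k + 1, Nat.succ_pos _, fun n hn => ?_⟩
  set K := k + 1 with hK
  set N := LinearMap.range φ with hN
  set D := (I ^ K • ⊤ ⊓ N : Submodule R (S → M)) with hD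
  apply le_antisymm
  · -- hard direction
    intro x hx
    have h1 : φ x ∈ (I ^ (n + K) • ⊤ ⊓ N : Submodule R (S → M)) := by
      refine ⟨pi_mem_smul_top _ _ fun a => ?_, ⟨x, rfl⟩⟩
      exact hx (a : R) (hS ▸ Ideal.subset_span a.2)
    rw [hk (n + K) (by omega)] at h1
    have hsub : (n + K - k) = n + 1 := by omega
    rw [hsub] at h1
    have h2 : φ x ∈ (I ^ n • D : Submodule R (S → M)) := by
      have e1 : (I ^ (n + 1) • (I ^ k • ⊤ ⊓ N) : Submodule R (S → M))
          = I ^ n • (I • (I ^ k • ⊤ ⊓ N)) := by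
        rw [pow_succ, mul_smul (I ^ n) I (I ^ k • ⊤ ⊓ N)]
      have hle : (I ^ (n + 1) • (I ^ k • ⊤ ⊓ N) : Submodule R (S → M)) ≤ I ^ n • D := by
        rw [e1, hD]
        refine Submodule.smul_mono le_rfl (le_inf ?_ ?_)
        · refine le_trans (Submodule.smul_mono le_rfl inf_le_left) ?_
          rw [hK, ← mul_smul I (I ^ k) (⊤ : Submodule R (S → M)), ← pow_succ']
        · exact le_trans (Submodule.smul_mono le_rfl inf_le_right)
            (Submodule.smul_le.2 fun r _ m hm => Submodule.smul_mem _ r hm)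
      exact hle h1
    have hDN : D ≤ N := inf_le_right
    have hmap : (I ^ n • D : Submodule R (S → M))
        = Submodule.map φ (I ^ n • Submodule.comap φ D) := by
      rw [Submodule.map_smul'', Submodule.map_comap_eq, ← hN, inf_eq_right.2 hDN]
    rw [hmap] at h2
    obtain ⟨y, hy, hyx⟩ := h2
    have hymem : y ∈ I ^ n • ((I ^ K • ⊤ : Submodule R M).colonBy J) := by
      refine Submodule.smul_mono le_rfl ?_ hy
      intro z hz
      refine mem_colonBy_of_gen hS fun a ha => ?_
      have := pi_smul_top_mem (I ^ K) (Submodule.mem_inf.1 hz).1 ⟨a, ha⟩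
      exact this
    have hker : x - y ∈ (⊥ : Submodule R M).colonBy J := by
      refine mem_colonBy_of_gen hS fun a ha => ?_
      have h0 : φ (x - y) = 0 := by rw [map_sub, hyx, sub_self]
      have h1 : φ (x - y) ⟨a, ha⟩ = 0 := by rw [h0]; rfl
      rw [hφ_apply] at h1
      simpa using h1
    have hx' : x = y + (x - y) := by abel
    rw [hx']
    exact Submodule.add_mem_sup hymem hker
  · -- easy direction
    rw [Submodule.add_eq_sup, sup_le_iff]
    constructor
    · intro x hx
      intro r hr
      refine Submodule.smul_induction_on hx (fun c hc m hm => ?_) (fun a b ha hb => ?_)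
      · rw [smul_comm]
        have : r • m ∈ (I ^ K • ⊤ : Submodule R M) := hm r hr
        rw [pow_add I n K, mul_smul]
        exact Submodule.smul_mem_smul hc this
      · rw [smul_add]; exact Submodule.add_mem _ ha hb
    · intro x hx r hr
      have := hx r hr
      simp only [Submodule.mem_bot] at this
      rw [this]
      exact Submodule.zero_mem _
end

section
/- Let (R, m) be a Noetherian local ring, I an m-primary ideal, and M a finitely generated R-module of Krull dimension t ≥ 2. Suppose that m = (I^{n+1}M :_R I^n M) for some n ≥ 0 (equivalently, for all n ≫ 0). Then equality holds between the irreducible multiplicity and the Hilbert multiplicity: f⁰_I(M) = e⁰_I(M). Equivalently, if P and Q are polynomials with rational coefficients of degrees t and t−1 respectively such that ℓ_R(M/I^{n+1}M) = P(n) and ℓ_R((I^{n+1}M :_M m)/I^{n+1}M) = Q(n) for all sufficiently large n, then (t−1)! times the leading coefficient of Q equals t! times the leading coefficient of P. -/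
open IsLocalRing Submodule

/-! ### Auxiliary lemmas -/

section HeightLemmas

open Order

lemma myHeight_add_one_le {α : Type*} [Preorder α] {u v : α} (h : u < v) :
    Order.height u + 1 ≤ Order.height v := by
  rw [Order.height_eq_iSup_lt_height v]
  exact le_iSup₂_of_le u h le_rfl

variable {α : Type*} [Lattice α]

/-- relative length: height of `b` inside the interval `[a, ∞)`. -/
noncomputable def relLen (a b : α) (h : a ≤ b) : ℕ∞ :=
  Order.height (⟨b, h⟩ : {x : α // a ≤ x})

lemma relLen_mono {a b b' : α} (h : a ≤ b) (h' : a ≤ b') (hbb' : b ≤ b') :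
    relLen a b h ≤ relLen a b' h' :=
  Order.height_mono (by exact Subtype.mk_le_mk.2 hbb')

variable [IsModularLattice α]

lemma relLen_le_add {a b c : α} (hab : a ≤ b) (hbc : b ≤ c) :
    relLen a c (hab.trans hbc) ≤ relLen a b hab + relLen b c hbc := by
  apply Order.height_le
  intro p hp
  -- strengthened claim by induction on length
  suffices H : ∀ (k : ℕ) (p : LTSeries {x : α // a ≤ x}), p.length = k →
      (p.length : ℕ∞) ≤ Order.height (⟨p.last.1 ⊓ b, le_inf p.last.2 hab⟩ : {x : α // a ≤ x})
        + Order.height (⟨p.last.1 ⊔ b, le_sup_right⟩ : {x : α // b ≤ x}) by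
    refine (H p.length p rfl).trans ?_
    gcongr
    · exact Order.height_mono (by rw [hp]; exact Subtype.mk_le_mk.2 inf_le_right)
    · exact Order.height_mono (by rw [hp]; exact Subtype.mk_le_mk.2 (sup_le le_rfl hbc))
  intro k
  induction k with
  | zero => intro p hp; rw [hp]; exact_mod_cast (zero_le : (0:ℕ∞) ≤ _)
  | succ k ih =>
    intro p hp
    have hne : p.length ≠ 0 := by omega
    have hlt : p.eraseLast.last < p.last := p.eraseLast_last_rel_last hne
    have hlen : p.eraseLast.length = k := by
      simp [RelSeries.eraseLast_length, hp]
    have IH := ih p.eraseLast hlen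
    rw [hlen] at IH
    set y := p.eraseLast.last with hy
    set x := p.last with hx
    have hyx : (y : α) < (x : α) := hlt
    rw [hp]
    push_cast
    by_cases hc : (x : α) ⊓ b ≤ (y : α) ⊓ b
    · have hsup : (y : α) ⊔ b < (x : α) ⊔ b :=
        sup_lt_sup_of_lt_of_inf_le_inf hyx hc
      have h1 : Order.height (⟨(y : α) ⊓ b, le_inf y.2 hab⟩ : {x : α // a ≤ x})
          ≤ Order.height (⟨(x : α) ⊓ b, le_inf x.2 hab⟩ : {x : α // a ≤ x}) :=
        Order.height_mono (Subtype.mk_le_mk.2 (inf_le_inf_right b hyx.le))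
      have h2 : Order.height (⟨(y : α) ⊔ b, le_sup_right⟩ : {x : α // b ≤ x}) + 1
          ≤ Order.height (⟨(x : α) ⊔ b, le_sup_right⟩ : {x : α // b ≤ x}) :=
        myHeight_add_one_le (Subtype.mk_lt_mk.2 hsup)
      calc (k : ℕ∞) + 1 ≤ (Order.height (⟨(y : α) ⊓ b, le_inf y.2 hab⟩ : {x : α // a ≤ x})
              + Order.height (⟨(y : α) ⊔ b, le_sup_right⟩ : {x : α // b ≤ x})) + 1 := by
            gcongr
        _ = Order.height (⟨(y : α) ⊓ b, le_inf y.2 hab⟩ : {x : α // a ≤ x})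
              + (Order.height (⟨(y : α) ⊔ b, le_sup_right⟩ : {x : α // b ≤ x}) + 1) := by
            rw [add_assoc]
        _ ≤ _ := by gcongr
    · have hinf : (y : α) ⊓ b < (x : α) ⊓ b :=
        lt_of_le_of_ne (inf_le_inf_right b hyx.le) (fun h => hc h.ge)
      have h1 : Order.height (⟨(y : α) ⊓ b, le_inf y.2 hab⟩ : {x : α // a ≤ x}) + 1
          ≤ Order.height (⟨(x : α) ⊓ b, le_inf x.2 hab⟩ : {x : α // a ≤ x}) :=
        myHeight_add_one_le (Subtype.mk_lt_mk.2 hinf)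
      have h2 : Order.height (⟨(y : α) ⊔ b, le_sup_right⟩ : {x : α // b ≤ x})
          ≤ Order.height (⟨(x : α) ⊔ b, le_sup_right⟩ : {x : α // b ≤ x}) :=
        Order.height_mono (Subtype.mk_le_mk.2 (sup_le_sup_right hyx.le b))
      calc (k : ℕ∞) + 1 ≤ (Order.height (⟨(y : α) ⊓ b, le_inf y.2 hab⟩ : {x : α // a ≤ x})
              + Order.height (⟨(y : α) ⊔ b, le_sup_right⟩ : {x : α // b ≤ x})) + 1 := by
            gcongr
        _ = (Order.height (⟨(y : α) ⊓ b, le_inf y.2 hab⟩ : {x : α // a ≤ x}) + 1)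
              + Order.height (⟨(y : α) ⊔ b, le_sup_right⟩ : {x : α // b ≤ x}) := by
            ac_rfl
        _ ≤ _ := by gcongr

lemma relLen_add_le {a b c : α} (hab : a ≤ b) (hbc : b ≤ c) :
    relLen a b hab + relLen b c hbc ≤ relLen a c (hab.trans hbc) := by
  unfold relLen
  rw [Order.height, Order.height, iSup_subtype', iSup_subtype']
  have : Nonempty {p : LTSeries {x : α // a ≤ x} // p.last ≤ ⟨b, hab⟩} :=
    ⟨⟨RelSeries.singleton _ ⟨b, hab⟩, by rw [RelSeries.last_singleton]⟩⟩
  have : Nonempty {p : LTSeries {x : α // b ≤ x} // p.last ≤ ⟨c, hbc⟩} :=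
    ⟨⟨RelSeries.singleton _ ⟨c, hbc⟩, by rw [RelSeries.last_singleton]⟩⟩
  apply ENat.iSup_add_iSup_le
  rintro ⟨p, hp⟩ ⟨q, hq⟩
  have hmap : StrictMono (fun z : {x : α // b ≤ x} => (⟨z.1, hab.trans z.2⟩ : {x : α // a ≤ x})) :=
    fun u v huv => Subtype.mk_lt_mk.2 (Subtype.coe_lt_coe.2 huv)
  set q' : LTSeries {x : α // a ≤ x} := q.map _ hmap with hq'
  have hq'head : p.last ≤ q'.head := by
    refine hp.trans ?_
    have : q'.head = ⟨q.head.1, hab.trans q.head.2⟩ := by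
      simp [hq', RelSeries.head_map]
    rw [this]
    exact Subtype.mk_le_mk.2 q.head.2
  have hq'last : q'.last ≤ (⟨c, hab.trans hbc⟩ : {x : α // a ≤ x}) := by
    have : q'.last = ⟨q.last.1, hab.trans q.last.2⟩ := by
      simp [hq', RelSeries.last_map]
    rw [this]
    exact Subtype.mk_le_mk.2 (Subtype.coe_le_coe.2 hq)
  rcases hq'head.lt_or_eq with hlt | heq
  · have := Order.length_le_height (p := p.append q' hlt)
      (x := (⟨c, hab.trans hbc⟩ : {x : α // a ≤ x}))
      (by rw [RelSeries.last_append]; exact hq'last)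
    rw [RelSeries.append_length] at this
    refine le_trans ?_ this
    have : q'.length = q.length := by simp [hq']
    rw [this]
    push_cast
    calc ((p.length : ℕ∞) + q.length) ≤ (p.length : ℕ∞) + q.length + 1 := le_self_add
      _ = _ := by ac_rfl
  · have := Order.length_le_height (p := p.smash q' heq)
      (x := (⟨c, hab.trans hbc⟩ : {x : α // a ≤ x}))
      (by rw [RelSeries.last_smash]; exact hq'last)
    have hlen : (p.smash q' heq).length = p.length + q.length := by simp [hq', RelSeries.smash]
    rw [hlen] at this
    exact_mod_cast this

lemma relLen_inf_le {x y : α} :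
    relLen (x ⊓ y) x inf_le_left ≤ relLen y (x ⊔ y) le_sup_right := by
  apply Order.height_le
  intro p hp
  have hmem : ∀ i, (p i).1 ≤ x := by
    intro i
    have h := p.monotone (Fin.le_last i)
    have h2 : p.toFun (Fin.last p.length) = (⟨x, inf_le_left⟩ : {z : α // x ⊓ y ≤ z}) := hp
    rw [h2] at h
    exact h
  let q : LTSeries {z : α // y ≤ z} :=
    ⟨p.length, fun i => ⟨(p i).1 ⊔ y, le_sup_right⟩, by
      intro i
      change _ < _
      refine Subtype.mk_lt_mk.2 ?_
      have hlt : (p i.castSucc).1 < (p i.succ).1 := p.step i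
      refine sup_lt_sup_of_lt_of_inf_le_inf hlt ?_
      have h1 : (p i.succ).1 ⊓ y ≤ x ⊓ y := inf_le_inf_right y (hmem _)
      have h2 : x ⊓ y ≤ (p i.castSucc).1 ⊓ y := le_inf (p i.castSucc).2 inf_le_right
      exact h1.trans h2⟩
  have hql : q.last ≤ (⟨x ⊔ y, le_sup_right⟩ : {z : α // y ≤ z}) := by
    refine Subtype.mk_le_mk.2 ?_
    exact sup_le_sup_right (hmem _) y
  exact Order.length_le_height (p := q) hql

lemma height_subtype_le {β : Type*} [PartialOrder β] (b : β) :
    Order.height (⟨b, le_rfl⟩ : {x : β // x ≤ b}) = Order.height b := by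
  apply le_antisymm
  · exact Order.height_le_height_apply_of_strictMono (fun z : {x : β // x ≤ b} => z.1)
      (fun u v huv => Subtype.coe_lt_coe.2 huv) _
  · apply Order.height_le
    intro p hp
    have hmem : ∀ i, p i ≤ b := by
      intro i
      have h := p.monotone (Fin.le_last i)
      have h2 : p.toFun (Fin.last p.length) = b := hp
      rw [h2] at h
      exact h
    let q : LTSeries {x : β // x ≤ b} :=
      ⟨p.length, fun i => ⟨p i, hmem i⟩, fun i => by change _ < _; exact Subtype.mk_lt_mk.2 (p.step i)⟩
    exact Order.length_le_height (p := q)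
      (x := (⟨b, le_rfl⟩ : {x : β // x ≤ b})) (Subtype.mk_le_mk.2 (hmem _))

end HeightLemmas

section LengthTransfers

variable {R M : Type*} [CommRing R] [AddCommGroup M] [Module R M]

/-- length of a submodule as a module = its height in the ambient lattice. -/
lemma moduleLength_submodule (X : Submodule R M) :
    moduleLength R X = Order.height X := by
  unfold moduleLength
  rw [← height_subtype_le (β := Submodule R M) X]
  rw [← Order.height_orderIso (Submodule.MapSubtype.orderIso X) ⊤]
  congr 1
  exact Subtype.ext (by simp [Submodule.MapSubtype.orderIso])

/-- length of a quotient module as relative length. -/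
lemma moduleLength_quotient (N : Submodule R M) :
    moduleLength R (M ⧸ N) = relLen N ⊤ le_top := by
  unfold moduleLength relLen
  rw [← Order.height_orderIso (Submodule.comapMkQRelIso N) ⊤]
  congr 1

/-- length of the image in `M ⧸ N` of a submodule `S ⊇ N` as relative length. -/
lemma moduleLength_map_mkQ (N S : Submodule R M) (hNS : N ≤ S) :
    moduleLength R (Submodule.map N.mkQ S) = relLen N S hNS := by
  rw [moduleLength_submodule]
  unfold relLen
  rw [← Order.height_orderIso (Submodule.comapMkQRelIso N) (Submodule.map N.mkQ S)]
  congr 1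
  exact Subtype.ext (by
    show Submodule.comap N.mkQ (Submodule.map N.mkQ S) = S
    rw [Submodule.comap_map_mkQ, sup_eq_right.2 hNS])

lemma Submodule.mem_colonBy {N : Submodule R M} {J : Ideal R} {x : M} :
    x ∈ N.colonBy J ↔ ∀ r ∈ J, r • x ∈ N := Iff.rfl

lemma pow_smul_pow_smul (I : Ideal R) (a b : ℕ) (N : Submodule R M) :
    I ^ a • (I ^ b • N) = I ^ (a + b) • N := by
  rw [pow_add, ← Submodule.smul_assoc, smul_eq_mul]

lemma ideal_smul_comm (J K : Ideal R) (N : Submodule R M) : J • (K • N) = K • (J • N) := by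
  rw [← Submodule.smul_assoc, ← Submodule.smul_assoc, smul_eq_mul, smul_eq_mul, mul_comm]

end LengthTransfers

section KeyLemma

universe u v

/-- Key lemma, universe-restricted version: elements of `I^j M` conducting `I` into
`I^{j+2} M` lie in `I^{j+1} M`, for all `j` large. -/
lemma kl_aux {R : Type u} [CommRing R] [IsNoetherianRing R] {M : Type u} [AddCommGroup M]
    [Module R M] [Module.Finite R M] (I : Ideal R) :
    ∃ d : ℕ, ∀ j ≥ d, ∀ x ∈ (I ^ j • ⊤ : Submodule R M),
      (∀ r ∈ I, r • x ∈ (I ^ (j + 2) • ⊤ : Submodule R M)) →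
        x ∈ (I ^ (j + 1) • ⊤ : Submodule R M) := by
  have smul_colon : ∀ j : ℕ, I • ((I ^ (j + 2) • ⊤ : Submodule R M).colonBy I)
      ≤ I ^ (j + 2) • ⊤ := fun j =>
    Submodule.smul_le.2 (fun r hr x hx => hx r hr)
  set U : I.Filtration M :=
    ⟨fun j => ((I ^ (j + 2) • ⊤ : Submodule R M).colonBy I) ⊓ (I ^ j • ⊤),
     fun j => inf_le_inf
       (fun x hx r hr => Submodule.smul_mono_left (Ideal.pow_le_pow_right (by omega)) (hx r hr))
       (Submodule.smul_mono_left (Ideal.pow_le_pow_right (by omega))),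
     fun j => by
       have h1 : I • (((I ^ (j + 2) • ⊤ : Submodule R M).colonBy I) ⊓ (I ^ j • ⊤))
           ≤ I ^ (j + 2) • ⊤ :=
         (Submodule.smul_mono le_rfl inf_le_left).trans (smul_colon j)
       refine le_inf (fun y hy => ?_)
         (h1.trans (Submodule.smul_mono_left (Ideal.pow_le_pow_right (by omega))))
       refine Submodule.mem_colonBy.2 (fun s hs => ?_)
       have h2 : s • y ∈ I • (I ^ (j + 2) • ⊤ : Submodule R M) :=
         Submodule.smul_mem_smul hs (h1 hy)
       have heq : I • (I ^ (j + 2) • ⊤ : Submodule R M) = I ^ (j + 3) • ⊤ := by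
         calc I • (I ^ (j + 2) • ⊤ : Submodule R M)
             = I ^ 1 • (I ^ (j + 2) • ⊤ : Submodule R M) := by rw [pow_one]
           _ = I ^ (1 + (j + 2)) • ⊤ := pow_smul_pow_smul I 1 (j + 2) ⊤
           _ = I ^ (j + 3) • ⊤ := by rw [show 1 + (j + 2) = j + 3 from by omega]
       rwa [heq] at h2⟩ with hU
  have hle : U ≤ I.stableFiltration ⊤ := by
    intro j
    exact inf_le_right
  have hst : U.Stable := (Ideal.stableFiltration_stable I ⊤).of_le hle
  obtain ⟨n0, hn0⟩ := hst.exists_pow_smul_eq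
  refine ⟨n0 + 1, fun j hj x hxj hcolon => ?_⟩
  have hxU : x ∈ U.N j := Submodule.mem_inf.2 ⟨Submodule.mem_colonBy.2 hcolon, hxj⟩
  set k := j - n0 with hk
  have hjk : j = n0 + k := by omega
  have hUj : U.N j = I ^ k • U.N n0 := by rw [hjk]; exact hn0 k
  have hsmall : I ^ 1 • U.N n0 ≤ I ^ (n0 + 2) • ⊤ := by
    rw [pow_one]
    exact (Submodule.smul_mono le_rfl inf_le_left).trans (smul_colon n0)
  have : U.N j ≤ I ^ (j + 1) • ⊤ := by
    calc U.N j = I ^ k • U.N n0 := hUj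
      _ = I ^ (k - 1) • (I ^ 1 • U.N n0) := by
          rw [pow_smul_pow_smul I (k - 1) 1 (U.N n0), show k - 1 + 1 = k from by omega]
      _ ≤ I ^ (k - 1) • (I ^ (n0 + 2) • ⊤) := Submodule.smul_mono le_rfl hsmall
      _ = I ^ (j + 1) • ⊤ := by
          rw [pow_smul_pow_smul I (k - 1) (n0 + 2) ⊤, show k - 1 + (n0 + 2) = j + 1 from by omega]
  exact this hxU

/-- Key lemma, general version. -/
lemma kl_main {R : Type u} [CommRing R] [IsNoetherianRing R] {M : Type v} [AddCommGroup M]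
    [Module R M] [Module.Finite R M] (I : Ideal R) :
    ∃ d : ℕ, ∀ j ≥ d, ∀ x ∈ (I ^ j • ⊤ : Submodule R M),
      (∀ r ∈ I, r • x ∈ (I ^ (j + 2) • ⊤ : Submodule R M)) →
        x ∈ (I ^ (j + 1) • ⊤ : Submodule R M) := by
  obtain ⟨n, f, hf⟩ := Module.Finite.exists_fin' R M
  let e : ((Fin n → R) ⧸ LinearMap.ker f) ≃ₗ[R] M := f.quotKerEquivOfSurjective hf
  have key : ∀ (k : ℕ) (x : M), x ∈ (I ^ k • ⊤ : Submodule R M) ↔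
      e.symm x ∈ (I ^ k • ⊤ : Submodule R ((Fin n → R) ⧸ LinearMap.ker f)) := by
    intro k x
    have hmap : Submodule.map (e : ((Fin n → R) ⧸ LinearMap.ker f) →ₗ[R] M)
        (I ^ k • ⊤ : Submodule R ((Fin n → R) ⧸ LinearMap.ker f)) = I ^ k • ⊤ := by
      rw [Submodule.map_smul'', Submodule.map_top, LinearEquiv.range]
    rw [← hmap, Submodule.mem_map_equiv]
  obtain ⟨d, hd⟩ := kl_aux (M := (Fin n → R) ⧸ LinearMap.ker f) I
  refine ⟨d, fun j hj x hx hcolon => ?_⟩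
  refine (key (j + 1) x).2 ?_
  refine hd j hj (e.symm x) ((key j x).1 hx) (fun r hr => ?_)
  have : r • e.symm x = e.symm (r • x) := (map_smul e.symm r x).symm
  rw [this]
  exact (key (j + 2) (r • x)).1 (hcolon r hr)

end KeyLemma

section PolyPart

open Polynomial

lemma poly_part (P Q : Polynomial ℚ) (t : ℕ) (ht : 2 ≤ t)
    (hPdeg : P.natDegree = t) (hQdeg : Q.natDegree = t - 1)
    (C n3 : ℕ) (p q : ℕ → ℕ)
    (hp : ∀ n ≥ n3, (p n : ℚ) = P.eval (n : ℚ))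
    (hq : ∀ n ≥ n3, (q n : ℚ) = Q.eval (n : ℚ))
    (low : ∀ n ≥ n3, p (n + 1) ≤ q (n + 1) + p n)
    (high : ∀ n ≥ n3, q (n + 1) + p n ≤ p (n + 1) + C) :
    ((t - 1).factorial : ℚ) * Q.leadingCoeff = (t.factorial : ℚ) * P.leadingCoeff := by
  set T : Polynomial ℚ := Polynomial.taylor (-1 : ℚ) P with hT
  set G : Polynomial ℚ := Q - P + T with hG
  have hTeval : ∀ x : ℚ, T.eval x = P.eval (x - 1) := by
    intro x
    rw [hT, Polynomial.taylor_apply, Polynomial.eval_comp]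
    simp [sub_eq_add_neg]
  set v : ℕ → ℕ := fun n => q (n + 1) + p n - p (n + 1) with hv
  have hGv : ∀ n ≥ n3, G.eval ((n + 1 : ℕ) : ℚ) = (v n : ℚ) := by
    intro n hn
    have h1 : ((n + 1 : ℕ) : ℚ) - 1 = (n : ℚ) := by push_cast; ring
    rw [hG]
    simp only [Polynomial.eval_add, Polynomial.eval_sub]
    rw [hTeval, h1, ← hq (n + 1) (by omega), ← hp (n + 1) (by omega), ← hp n hn, hv]
    have := low n hn
    push_cast [Nat.cast_sub (low n hn)]
    ring
  have hvC : ∀ n ≥ n3, v n ≤ C := by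
    intro n hn
    have h1 := high n hn
    have h2 := low n hn
    have hvn : v n = q (n + 1) + p n - p (n + 1) := rfl
    omega
  have hpig : ∃ c : ℕ, {n : ℕ | n3 ≤ n ∧ v n = c}.Infinite := by
    by_contra hcon
    push_neg at hcon
    have hsub : Set.Ici n3 ⊆ ⋃ c ∈ Finset.range (C + 1), {n : ℕ | n3 ≤ n ∧ v n = c} := by
      intro n hn
      simp only [Set.mem_iUnion, Set.mem_setOf_eq, Finset.mem_coe, Finset.mem_range]
      exact ⟨v n, by have := hvC n hn; omega, hn, rfl⟩
    have hfin : (Set.Ici n3).Finite :=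
      (Set.Finite.biUnion (Finset.range (C + 1)).finite_toSet (fun c _ => hcon c)).subset hsub
    exact Set.Ici_infinite n3 hfin
  obtain ⟨c, hc⟩ := hpig
  have hroots : {x : ℚ | (G - Polynomial.C (c : ℚ)).IsRoot x}.Infinite := by
    refine Set.Infinite.mono ?_ (hc.image (f := fun n : ℕ => ((n + 1 : ℕ) : ℚ))
      (fun a _ b _ hab => by
        dsimp only at hab
        exact Nat.succ_injective (by exact_mod_cast hab)))
    rintro x ⟨n, ⟨hn3, hvn⟩, rfl⟩
    simp only [Set.mem_setOf_eq, Polynomial.IsRoot, Polynomial.eval_sub, Polynomial.eval_C]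
    rw [hGv n hn3, hvn]
    ring
  have hGC : G = Polynomial.C (c : ℚ) := by
    have := Polynomial.eq_zero_of_infinite_isRoot (G - Polynomial.C (c : ℚ)) hroots
    linear_combination (norm := ring_nf) this
  have hQeq : Q = Polynomial.C (c : ℚ) + P - T := by
    have : Q - P + T = Polynomial.C (c : ℚ) := hG ▸ hGC
    linear_combination (norm := ring_nf) this
  have hH : Polynomial.hasseDeriv (t - 1) P
      = Polynomial.C (P.coeff (t - 1)) + Polynomial.C ((t : ℚ) * P.coeff t) * Polynomial.X := by
    ext n
    rw [Polynomial.hasseDeriv_coeff]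
    rcases n with _ | n
    · simp [Nat.choose_self, Polynomial.coeff_C]
    · rcases n with _ | n
      · have h1 : 1 + (t - 1) = t := by omega
        rw [h1]
        have h2 : t.choose (t - 1) = t := by
          have := Nat.choose_symm (by omega : t - 1 ≤ t)
          rw [show t - (t - 1) = 1 from by omega] at this
          rw [← this, Nat.choose_one_right]
        rw [h2]
        simp [Polynomial.coeff_C]
      · have h3 : t < n + 2 + (t - 1) := by omega
        rw [Polynomial.coeff_eq_zero_of_natDegree_lt (by omega : P.natDegree < n + 2 + (t - 1))]
        simp [Polynomial.coeff_C, Polynomial.coeff_X]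
  have hTc : T.coeff (t - 1) = P.coeff (t - 1) - (t : ℚ) * P.coeff t := by
    rw [hT, Polynomial.taylor_coeff, hH]
    simp only [Polynomial.eval_add, Polynomial.eval_C, Polynomial.eval_mul, Polynomial.eval_X]
    ring
  have hQc : Q.coeff (t - 1) = (t : ℚ) * P.coeff t := by
    rw [hQeq]
    simp only [Polynomial.coeff_add, Polynomial.coeff_sub, Polynomial.coeff_C]
    rw [hTc]
    have hne : (t - 1 : ℕ) ≠ 0 := by omega
    simp [hne]
  have hlq : Q.leadingCoeff = (t : ℚ) * P.coeff t := by
    rw [Polynomial.leadingCoeff, hQdeg, hQc]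
  have hlp : P.leadingCoeff = P.coeff t := by rw [Polynomial.leadingCoeff, hPdeg]
  rw [hlq, hlp]
  obtain ⟨s, rfl⟩ : ∃ s, t = s + 1 := ⟨t - 1, by omega⟩
  rw [show s + 1 - 1 = s from rfl, Nat.factorial_succ]
  push_cast
  ring

end PolyPart

/-- If `dim M = t ≥ 2` and `𝔪 = (I^{n+1}M :_R I^n M)` for some `n`, then
`f⁰_I(M) = e⁰_I(M)`. -/
theorem statement4 {R M : Type*} [CommRing R] [IsNoetherianRing R] [IsLocalRing R]
    [AddCommGroup M] [Module R M] [Module.Finite R M]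
    (I : Ideal R) (hI : I.radical = maximalIdeal R)
    (t : ℕ) (ht : 2 ≤ t)
    (hdim : ringKrullDim (R ⧸ Module.annihilator R M) = t)
    (hcond : ∃ n : ℕ, maximalIdeal R =
      Submodule.colon (I ^ (n + 1) • ⊤ : Submodule R M) ((I ^ n • ⊤ : Submodule R M) : Set M))
    (P Q : Polynomial ℚ) (hPdeg : P.natDegree = t) (hQdeg : Q.natDegree = t - 1)
    (hP : ∃ N : ℕ, ∀ n ≥ N, ∃ len : ℕ,
      moduleLength R (M ⧸ (I ^ (n + 1) • ⊤ : Submodule R M)) = len ∧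
        (len : ℚ) = P.eval (n : ℚ))
    (hQ : ∃ N : ℕ, ∀ n ≥ N, ∃ len : ℕ,
      moduleLength R ↥(Submodule.map (I ^ (n + 1) • ⊤ : Submodule R M).mkQ
        ((I ^ (n + 1) • ⊤ : Submodule R M).colonBy (maximalIdeal R))) = len ∧
        (len : ℚ) = Q.eval (n : ℚ)) :
    ((t - 1).factorial : ℚ) * Q.leadingCoeff = (t.factorial : ℚ) * P.leadingCoeff := by
  classical
  set m : Ideal R := maximalIdeal R with hm
  have hIm : I ≤ m := le_trans Ideal.le_radical (le_of_eq hI)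
  obtain ⟨n1, hcolon⟩ := hcond
  obtain ⟨NP, hNP⟩ := hP
  obtain ⟨NQ, hNQ⟩ := hQ
  -- choice functions for the lengths
  set p : ℕ → ℕ := fun n => if h : NP ≤ n then (hNP n h).choose else 0 with hpdef
  have hpl : ∀ n, NP ≤ n → moduleLength R (M ⧸ (I ^ (n + 1) • ⊤ : Submodule R M)) = p n
      ∧ (p n : ℚ) = P.eval (n : ℚ) := by
    intro n h
    have hs := (hNP n h).choose_spec
    rw [hpdef]
    simp only [dif_pos h]
    exact hs
  set q : ℕ → ℕ := fun n => if h : NQ ≤ n then (hNQ n h).choose else 0 with hqdef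
  have hql : ∀ n, NQ ≤ n → moduleLength R ↥(Submodule.map (I ^ (n + 1) • ⊤ : Submodule R M).mkQ
      ((I ^ (n + 1) • ⊤ : Submodule R M).colonBy m)) = q n ∧ (q n : ℚ) = Q.eval (n : ℚ) := by
    intro n h
    have hs := (hNQ n h).choose_spec
    rw [hqdef]
    simp only [dif_pos h]
    exact hs
  -- the smul condition propagates
  have hbase : m • (I ^ n1 • ⊤ : Submodule R M) ≤ I ^ (n1 + 1) • ⊤ := by
    refine Submodule.smul_le.2 (fun r hr x hx => ?_)
    have hr' : r ∈ Submodule.colon (I ^ (n1 + 1) • ⊤ : Submodule R M) ((I ^ n1 • ⊤ : Submodule R M) : Set M) :=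
      hcolon ▸ hr
    exact Submodule.mem_colon.1 hr' x hx
  have hsm : ∀ n, n1 ≤ n → m • (I ^ n • ⊤ : Submodule R M) ≤ I ^ (n + 1) • ⊤ := by
    intro n hn
    obtain ⟨j, rfl⟩ : ∃ j, n = n1 + j := ⟨n - n1, by omega⟩
    calc m • (I ^ (n1 + j) • ⊤ : Submodule R M)
        = m • (I ^ j • (I ^ n1 • ⊤ : Submodule R M)) := by
          rw [pow_smul_pow_smul I j n1 (⊤ : Submodule R M),
            show j + n1 = n1 + j from by omega]
      _ = I ^ j • (m • (I ^ n1 • ⊤ : Submodule R M)) := ideal_smul_comm _ _ _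
      _ ≤ I ^ j • (I ^ (n1 + 1) • ⊤ : Submodule R M) := Submodule.smul_mono le_rfl hbase
      _ = I ^ (n1 + j + 1) • ⊤ := by
          rw [pow_smul_pow_smul I j (n1 + 1) (⊤ : Submodule R M),
            show j + (n1 + 1) = n1 + j + 1 from by omega]
  obtain ⟨d0, hd0⟩ := kl_main (M := M) I
  set d : ℕ := max (max (d0 + 1) 1) (NP + 1) with hd
  obtain ⟨n3, hn3d, hn3n1, hn3P, hn3Q⟩ :
      ∃ n3, d ≤ n3 ∧ n1 ≤ n3 ∧ NP ≤ n3 ∧ NQ ≤ n3 :=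
    ⟨max (max d n1) (max NP NQ), by omega, by omega, by omega, by omega⟩
  have hdd0 : d0 ≤ d := by omega
  have hd1 : 1 ≤ d := by omega
  have hdNP : NP ≤ d - 1 := by omega
  -- the constant
  obtain hCd := hpl (d - 1) hdNP
  set Cd : ℕ := p (d - 1) with hCddef
  have hCd1 : moduleLength R (M ⧸ (I ^ d • ⊤ : Submodule R M)) = Cd := by
    have := hCd.1
    rwa [show d - 1 + 1 = d from by omega] at this
  -- basic inclusions
  have hAS : ∀ n : ℕ, (I ^ (n + 1) • ⊤ : Submodule R M)
      ≤ (I ^ (n + 1) • ⊤ : Submodule R M).colonBy m :=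
    fun n x hx r hr => Submodule.smul_mem _ r hx
  have hprev : ∀ n, n1 ≤ n → (I ^ (n + 1) • ⊤ : Submodule R M)
      ≤ (I ^ (n + 2) • ⊤ : Submodule R M).colonBy m :=
    fun n hn x hx r hr => hsm (n + 1) (by omega) (Submodule.smul_mem_smul hr hx)
  -- the key inclusion from the graded socle vanishing
  have hSD : ∀ n, n3 ≤ n → ((I ^ (n + 2) • ⊤ : Submodule R M).colonBy m) ⊓ (I ^ d • ⊤)
      ≤ I ^ (n + 1) • ⊤ := by
    intro n hn
    have claim : ∀ i, d + i ≤ n + 1 →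
        ((I ^ (n + 2) • ⊤ : Submodule R M).colonBy m) ⊓ (I ^ d • ⊤) ≤ I ^ (d + i) • ⊤ := by
      intro i
      induction i with
      | zero => intro _; exact inf_le_right
      | succ i ih =>
        intro hle
        intro x hx
        have hxi : x ∈ (I ^ (d + i) • ⊤ : Submodule R M) := ih (by omega) hx
        have hcol : ∀ r ∈ I, r • x ∈ (I ^ (d + i + 2) • ⊤ : Submodule R M) := by
          intro r hr
          have h1 : r • x ∈ (I ^ (n + 2) • ⊤ : Submodule R M) :=
            (Submodule.mem_inf.1 hx).1 r (hIm hr)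
          exact Submodule.smul_mono_left (Ideal.pow_le_pow_right (by omega)) h1
        have := hd0 (d + i) (by omega) x hxi hcol
        rwa [show d + (i + 1) = d + i + 1 from by omega]
    have := claim (n + 1 - d) (by omega)
    rwa [show d + (n + 1 - d) = n + 1 from by omega] at this
  -- per-n numeric inequalities
  have key : ∀ n, n3 ≤ n →
      p (n + 1) ≤ q (n + 1) + p n ∧ q (n + 1) + p n ≤ p (n + 1) + Cd := by
    intro n hn
    have hA1A : (I ^ (n + 2) • ⊤ : Submodule R M) ≤ I ^ (n + 1) • ⊤ :=
      Submodule.smul_mono (Ideal.pow_le_pow_right (by omega)) le_rfl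
    have hAD : (I ^ (n + 2) • ⊤ : Submodule R M) ≤ I ^ d • ⊤ :=
      Submodule.smul_mono (Ideal.pow_le_pow_right (by omega)) le_rfl
    have e1 : relLen (I ^ (n + 2) • ⊤ : Submodule R M) ⊤ le_top = (p (n + 1) : ℕ∞) := by
      rw [← moduleLength_quotient]
      exact (hpl (n + 1) (by omega)).1
    have e0 : relLen (I ^ (n + 1) • ⊤ : Submodule R M) ⊤ le_top = (p n : ℕ∞) := by
      rw [← moduleLength_quotient]
      exact (hpl n (by omega)).1
    have eD : relLen (I ^ d • ⊤ : Submodule R M) ⊤ le_top = (Cd : ℕ∞) := by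
      rw [← moduleLength_quotient]
      exact hCd1
    have eq1 : relLen (I ^ (n + 2) • ⊤ : Submodule R M)
        ((I ^ (n + 2) • ⊤ : Submodule R M).colonBy m) (hAS (n + 1)) = (q (n + 1) : ℕ∞) := by
      rw [← moduleLength_map_mkQ]
      exact (hql (n + 1) (by omega)).1
    -- lower bound
    have hlow : (p (n + 1) : ℕ∞) ≤ (q (n + 1) : ℕ∞) + (p n : ℕ∞) := by
      calc (p (n + 1) : ℕ∞) = relLen (I ^ (n + 2) • ⊤ : Submodule R M) ⊤ le_top := e1.symm
        _ ≤ relLen (I ^ (n + 2) • ⊤ : Submodule R M) (I ^ (n + 1) • ⊤) hA1A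
            + relLen (I ^ (n + 1) • ⊤ : Submodule R M) ⊤ le_top := relLen_le_add hA1A le_top
        _ ≤ relLen (I ^ (n + 2) • ⊤ : Submodule R M)
              ((I ^ (n + 2) • ⊤ : Submodule R M).colonBy m) (hAS (n + 1))
            + relLen (I ^ (n + 1) • ⊤ : Submodule R M) ⊤ le_top :=
            add_le_add (relLen_mono _ _ (hprev n (by omega))) le_rfl
        _ = (q (n + 1) : ℕ∞) + (p n : ℕ∞) := by rw [eq1, e0]
    -- upper bound
    set g : ℕ∞ := relLen (I ^ (n + 2) • ⊤ : Submodule R M) (I ^ (n + 1) • ⊤) hA1A with hg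
    have hASD : (I ^ (n + 2) • ⊤ : Submodule R M)
        ≤ ((I ^ (n + 2) • ⊤ : Submodule R M).colonBy m) ⊓ (I ^ d • ⊤) :=
      le_inf (hAS (n + 1)) hAD
    have hup1 : relLen (I ^ (n + 2) • ⊤ : Submodule R M)
        ((I ^ (n + 2) • ⊤ : Submodule R M).colonBy m) (hAS (n + 1)) ≤ g + (Cd : ℕ∞) := by
      calc relLen (I ^ (n + 2) • ⊤ : Submodule R M)
            ((I ^ (n + 2) • ⊤ : Submodule R M).colonBy m) (hAS (n + 1))
          ≤ relLen (I ^ (n + 2) • ⊤ : Submodule R M)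
              (((I ^ (n + 2) • ⊤ : Submodule R M).colonBy m) ⊓ (I ^ d • ⊤)) hASD
            + relLen (((I ^ (n + 2) • ⊤ : Submodule R M).colonBy m) ⊓ (I ^ d • ⊤))
              ((I ^ (n + 2) • ⊤ : Submodule R M).colonBy m) inf_le_left :=
            relLen_le_add hASD inf_le_left
        _ ≤ g + (Cd : ℕ∞) := by
            refine add_le_add ?_ ?_
            · exact relLen_mono _ _ (hSD n hn)
            · refine le_trans relLen_inf_le ?_
              rw [← eD]
              exact relLen_mono _ _ le_top
    have hup2 : g + (p n : ℕ∞) ≤ (p (n + 1) : ℕ∞) := by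
      rw [← e0, ← e1]
      exact relLen_add_le hA1A le_top
    have hhigh : (q (n + 1) : ℕ∞) + (p n : ℕ∞) ≤ (p (n + 1) : ℕ∞) + (Cd : ℕ∞) := by
      calc (q (n + 1) : ℕ∞) + (p n : ℕ∞) ≤ (g + (Cd : ℕ∞)) + (p n : ℕ∞) :=
            add_le_add (eq1 ▸ hup1) le_rfl
        _ = (g + (p n : ℕ∞)) + (Cd : ℕ∞) := by ac_rfl
        _ ≤ (p (n + 1) : ℕ∞) + (Cd : ℕ∞) := add_le_add hup2 le_rfl
    constructor
    · exact_mod_cast hlow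
    · exact_mod_cast hhigh
  exact poly_part P Q t ht hPdeg hQdeg Cd n3 p q
    (fun n hn => (hpl n (by omega)).2)
    (fun n hn => (hql n (by omega)).2)
    (fun n hn => (key n hn).1)
    (fun n hn => (key n hn).2)
end

section
/- Let (R, m) be a Noetherian local ring, I an m-primary ideal, and M a finitely generated R-module. Then for all sufficiently large n, ℓ_R((I^{n+1}M :_M m)/I^{n+1}M) ≤ ℓ_R(I^n M/I^{n+1}M) + ℓ_R(0 :_M m). -/
open IsLocalRing Submodule

/-!
Let `H = (0 :_M 𝔪^∞)`. Since `H` is killed by a power of `I`, Artin–Rees gives `I^n M ∩ H = 0`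
for `n ≫ 0`; and `M/H` has zero socle, so by prime avoidance `I` contains an `M/H`-regular element
`a`. On such a module, Artin–Rees for `aM` gives `(I^{n+c}M : 𝔪) ⊆ I^n M`, and stability of the
`I`-filtration `(I^{k+2}M : 𝔪) ∩ I^k M` (a sub-filtration of the `I`-adic one) shows that an
element of `(I^{n+1}M : 𝔪)` lying in `I^k M`, `k ≫ 0`, lies in `I^{k+1} M`, hence climbs to `I^n M`.
Pulled back to `M` this reads `(I^{n+1}M : 𝔪) ⊆ I^n M + H`, and as `I^n M ∩ H = 0` the `H`-component
of such an element is in the socle. Subadditivity of length finishes the proof.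
-/

section Length

variable {R M M' : Type*} [Ring R] [AddCommGroup M] [Module R M] [AddCommGroup M'] [Module R M']

theorem moduleLength_eq_length : moduleLength R M = Module.length R M :=
  (Module.length_eq_height R M).symm

theorem Submodule.length_mono {A B : Submodule R M} (h : A ≤ B) :
    Module.length R A ≤ Module.length R B :=
  Module.length_le_of_injective (inclusion h) (inclusion_injective h)

theorem Submodule.length_map_le (f : M →ₗ[R] M') (N : Submodule R M) :
    Module.length R (N.map f) ≤ Module.length R N :=
  Module.length_le_of_surjective (f.submoduleMap N) (f.submoduleMap_surjective N)

theorem Submodule.length_sup_le (A B : Submodule R M) :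
    Module.length R ↥(A ⊔ B) ≤ Module.length R A + Module.length R B := by
  rw [sup_eq_range, ← Module.length_prod]
  exact Module.length_le_of_surjective _ (LinearMap.surjective_rangeRestrict _)

theorem Submodule.length_map_le_add_of_le_sup (f : M →ₗ[R] M') {X A B : Submodule R M}
    (h : X ≤ A ⊔ B) : Module.length R (X.map f) ≤ Module.length R (A.map f) + Module.length R B :=
  calc Module.length R (X.map f)
      ≤ Module.length R ↥(A.map f ⊔ B.map f) := length_mono (map_sup A B f ▸ map_mono h)
    _ ≤ Module.length R (A.map f) + Module.length R (B.map f) := length_sup_le _ _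
    _ ≤ Module.length R (A.map f) + Module.length R B := add_le_add_right (length_map_le f B) _

end Length

namespace Submodule

variable {R M M' : Type*} [CommRing R] [AddCommGroup M] [Module R M] [AddCommGroup M'] [Module R M']
  {N N' : Submodule R M} {J J' : Ideal R}

theorem mem_colonBy_s10 {x : M} : x ∈ N.colonBy J ↔ ∀ r ∈ J, r • x ∈ N := Iff.rfl

theorem colonBy_mono (h : N ≤ N') : N.colonBy J ≤ N'.colonBy J :=
  fun _ hx r hr => h (hx r hr)

theorem colonBy_anti (h : J' ≤ J) : N.colonBy J ≤ N.colonBy J' :=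
  fun _ hx r hr => hx r (h hr)

theorem le_colonBy : N ≤ N.colonBy J :=
  fun _ hx r _ => N.smul_mem r hx

theorem smul_colonBy_le : J • N.colonBy J ≤ N :=
  smul_le.mpr fun r hr _ hx => hx r hr

theorem smul_colonBy_le_colonBy_smul (I : Ideal R) : I • N.colonBy J ≤ (I • N).colonBy J :=
  smul_le.mpr fun a ha x hx r hr => smul_comm a r x ▸ smul_mem_smul ha (hx r hr)

theorem colonBy_inf : (N ⊓ N').colonBy J = N.colonBy J ⊓ N'.colonBy J := by
  ext x
  simp only [mem_colonBy_s10, mem_inf]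
  exact ⟨fun h => ⟨fun r hr => (h r hr).1, fun r hr => (h r hr).2⟩,
    fun h r hr => ⟨h.1 r hr, h.2 r hr⟩⟩

theorem colonBy_colonBy : (N.colonBy J).colonBy J' = N.colonBy (J * J') := by
  ext x
  have : x ∈ N.colonBy (J * J') ↔ J * J' ≤ N.colon {x} :=
    ⟨fun h r hr => mem_colon_singleton.mpr (h r hr), fun h r hr => mem_colon_singleton.mp (h hr)⟩
  simp only [this, Ideal.mul_le, mem_colon_singleton, mul_smul, mem_colonBy_s10]
  exact forall₂_comm

theorem comap_colonBy (f : M' →ₗ[R] M) : (N.colonBy J).comap f = (N.comap f).colonBy J := by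
  ext x
  simp [mem_colonBy_s10]

theorem colonBy_inf_sup_le (A H : Submodule R M) :
    A.colonBy J ⊓ (A ⊔ H) ≤ A ⊔ (A ⊓ H).colonBy J := by
  rintro x ⟨hx, hxAH⟩
  obtain ⟨y, hy, h, hh, rfl⟩ := mem_sup.mp hxAH
  have hhA : h ∈ A.colonBy J := by
    simpa using sub_mem hx (le_colonBy (J := J) hy)
  have hh' : h ∈ (A ⊓ H).colonBy J := by
    rw [colonBy_inf]
    exact ⟨hhA, le_colonBy hh⟩
  exact mem_sup.mpr ⟨y, hy, h, hh', rfl⟩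

theorem colonBy_bot_quotient_eq_bot {H : Submodule R M} (h : H.colonBy J ≤ H) :
    (⊥ : Submodule R (M ⧸ H)).colonBy J = ⊥ := by
  refine eq_bot_iff.mpr <| (comap_le_comap_iff_of_surjective H.mkQ_surjective).mp ?_
  rwa [comap_colonBy, comap_bot, ker_mkQ]

theorem comap_mkQ_smul_top (H : Submodule R M) (I : Ideal R) :
    (I • ⊤ : Submodule R (M ⧸ H)).comap H.mkQ = I • ⊤ ⊔ H := by
  rw [← range_mkQ H, ← map_top, ← map_smul'', comap_map_mkQ, sup_comm]

theorem exists_colonBy_colonBy_pow_eq [IsNoetherian R M] (J : Ideal R) :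
    ∃ s, ((⊥ : Submodule R M).colonBy (J ^ s)).colonBy J = (⊥ : Submodule R M).colonBy (J ^ s) := by
  let f : ℕ →o Submodule R M :=
    ⟨fun j => (⊥ : Submodule R M).colonBy (J ^ j),
      fun _ _ h => colonBy_anti (Ideal.pow_le_pow_right h)⟩
  obtain ⟨s, hs⟩ := monotone_stabilizes_iff_noetherian.mpr ‹_› f
  exact ⟨s, by rw [colonBy_colonBy, ← pow_succ]; exact (hs (s + 1) s.le_succ).symm⟩

end Submodule

open Submodule

namespace Ideal

variable {R M : Type*} [CommRing R] [AddCommGroup M] [Module R M] (I : Ideal R) {J : Ideal R}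

theorem antitone_pow_smul_top : Antitone fun n : ℕ => I ^ n • (⊤ : Submodule R M) :=
  fun _ _ h => smul_mono_left (pow_le_pow_right h)

theorem colonBy_pow_succ_inf_le_of_forall_ge {K : ℕ}
    (hK : ∀ k ≥ K, (I ^ (k + 2) • ⊤ : Submodule R M).colonBy J ⊓ I ^ k • ⊤ ≤ I ^ (k + 1) • ⊤)
    {j : ℕ} (hj : K ≤ j) (n : ℕ) (hn : j ≤ n) :
    (I ^ (n + 1) • ⊤ : Submodule R M).colonBy J ⊓ I ^ j • ⊤ ≤ I ^ n • ⊤ := by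
  induction n, hn using Nat.le_induction with
  | base => exact inf_le_right
  | succ n hjn ih =>
    refine le_trans (le_inf inf_le_left ?_) (hK n (hj.trans hjn))
    exact (inf_le_inf_right _ (colonBy_mono (I.antitone_pow_smul_top (by omega)))).trans ih

variable [IsNoetherianRing R] [Module.Finite R M]

theorem exists_pow_add_smul_top_inf_le (N : Submodule R M) :
    ∃ k, ∀ n, I ^ (n + k) • (⊤ : Submodule R M) ⊓ N ≤ I ^ n • N := by
  obtain ⟨k, hk⟩ := I.exists_pow_inf_eq_pow_smul N
  refine ⟨k, fun n => ?_⟩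
  rw [hk (n + k) (Nat.le_add_left k n), Nat.add_sub_cancel]
  exact smul_mono_right _ inf_le_right

theorem exists_pow_smul_top_inf_eq_bot {N : Submodule R M} {s : ℕ} (hN : I ^ s • N = ⊥) :
    ∃ n₀, ∀ n ≥ n₀, I ^ n • (⊤ : Submodule R M) ⊓ N = ⊥ := by
  obtain ⟨k, hk⟩ := I.exists_pow_add_smul_top_inf_le N
  refine ⟨s + k, fun n hn => eq_bot_iff.mpr ?_⟩
  have h := hk (n - k)
  rw [Nat.sub_add_cancel (by omega)] at h
  exact h.trans (hN ▸ smul_mono_left (pow_le_pow_right (by omega)))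

theorem exists_colonBy_pow_add_le (hIJ : I ≤ J) {a : R} (ha : a ∈ I)
    (hreg : IsSMulRegular M a) :
    ∃ c, ∀ n, (I ^ (n + c) • ⊤ : Submodule R M).colonBy J ≤ I ^ n • ⊤ := by
  obtain ⟨c, hc⟩ :=
    I.exists_pow_add_smul_top_inf_le ((⊤ : Submodule R M).map (LinearMap.lsmul R M a))
  refine ⟨c, fun n x hx => ?_⟩
  have hax : a • x ∈ (I ^ n • ⊤ : Submodule R M).map (LinearMap.lsmul R M a) := by
    rw [map_smul'']
    exact hc n ⟨hx a (hIJ ha), x, trivial, rfl⟩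
  obtain ⟨y, hy, hyx⟩ := hax
  rwa [← hreg hyx]

theorem exists_colonBy_pow_add_two_inf_le (hIJ : I ≤ J) :
    ∃ K, ∀ k ≥ K, (I ^ (k + 2) • ⊤ : Submodule R M).colonBy J ⊓ I ^ k • ⊤ ≤ I ^ (k + 1) • ⊤ := by
  have hpow (k : ℕ) : I ^ (k + 1) • (⊤ : Submodule R M) = I • I ^ k • ⊤ := by
    rw [pow_succ', mul_smul]
  let F : I.Filtration M :=
    { N := fun k => (I ^ (k + 2) • ⊤ : Submodule R M).colonBy J ⊓ I ^ k • ⊤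
      mono := fun k => inf_le_inf (colonBy_mono (I.antitone_pow_smul_top (by omega)))
        (I.antitone_pow_smul_top (by omega))
      smul_le := fun k => (smul_inf_le _ _ _).trans <| inf_le_inf
        ((smul_colonBy_le_colonBy_smul I).trans_eq (by rw [← hpow])) (hpow k).ge }
  have hF : F ≤ I.stableFiltration ⊤ := fun k => inf_le_right
  obtain ⟨n₀, hn₀⟩ := (I.stableFiltration_stable ⊤).of_le hF
  refine ⟨n₀ + 1, fun k hk => ?_⟩
  obtain ⟨j, rfl⟩ : ∃ j, k = j + 1 := ⟨k - 1, by omega⟩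
  change F.N (j + 1) ≤ _
  rw [← hn₀ j (by omega)]
  exact (smul_mono hIJ inf_le_left).trans smul_colonBy_le

theorem exists_colonBy_pow_succ_le_of_isSMulRegular (hIJ : I ≤ J) {a : R} (ha : a ∈ I)
    (hreg : IsSMulRegular M a) :
    ∃ N, ∀ n ≥ N, (I ^ (n + 1) • ⊤ : Submodule R M).colonBy J ≤ I ^ n • ⊤ := by
  obtain ⟨c, hc⟩ := I.exists_colonBy_pow_add_le hIJ ha hreg
  obtain ⟨K, hK⟩ := I.exists_colonBy_pow_add_two_inf_le (M := M) hIJ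
  refine ⟨K + c, fun n hn x hx => ?_⟩
  have hstart : x ∈ I ^ (n - c) • (⊤ : Submodule R M) :=
    hc (n - c) (colonBy_mono (I.antitone_pow_smul_top (by omega)) hx)
  exact I.colonBy_pow_succ_inf_le_of_forall_ge hK (by omega) n (by omega) ⟨hx, hstart⟩

end Ideal

theorem exists_mem_isSMulRegular_of_forall_not_le {R M : Type*} [CommRing R] [IsNoetherianRing R]
    [AddCommGroup M] [Module R M] [Module.Finite R M] {I : Ideal R}
    (h : ∀ p ∈ associatedPrimes R M, ¬I ≤ p) : ∃ a ∈ I, IsSMulRegular M a := by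
  by_contra! hI
  obtain ⟨p, hp, hIp⟩ := (Ideal.subset_union_prime_finite (associatedPrimes.finite R M)
    (f := id) ⊥ ⊥ fun p hp _ _ => hp.isPrime).mp <| by
      simp_rw [id, biUnion_associatedPrimes_eq_compl_regular R M]
      exact hI
  exact h p hp hIp

section LocalRing

variable {R M : Type*} [CommRing R] [IsNoetherianRing R] [IsLocalRing R]
  [AddCommGroup M] [Module R M]

theorem not_le_of_mem_associatedPrimes_of_colonBy_bot_eq_bot {I : Ideal R}
    (hI : I.radical = maximalIdeal R)
    (hsoc : (⊥ : Submodule R M).colonBy (maximalIdeal R) = ⊥) {p : Ideal R}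
    (hp : p ∈ associatedPrimes R M) : ¬I ≤ p := by
  intro hIp
  obtain ⟨hprime, z, rfl⟩ := isAssociatedPrime_iff.mp hp
  have hm : maximalIdeal R ≤ (⊥ : Submodule R M).colon {z} :=
    calc maximalIdeal R = I.radical := hI.symm
      _ ≤ Ideal.radical _ := Ideal.radical_mono hIp
      _ = _ := hprime.radical
  have hz : z ∈ (⊥ : Submodule R M).colonBy (maximalIdeal R) :=
    fun r hr => mem_colon_singleton.mp (hm hr)
  rw [hsoc, mem_bot] at hz
  exact hprime.ne_top (eq_top_iff.mpr fun r _ => mem_colon_singleton.mpr (by simp [hz]))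

variable [Module.Finite R M]

theorem exists_colonBy_pow_succ_le_sup_socle {I : Ideal R} (hI : I.radical = maximalIdeal R) :
    ∃ N, ∀ n ≥ N, (I ^ (n + 1) • ⊤ : Submodule R M).colonBy (maximalIdeal R) ≤
      I ^ n • ⊤ ⊔ (⊥ : Submodule R M).colonBy (maximalIdeal R) := by
  set 𝔪 := maximalIdeal R
  have hI𝔪 : I ≤ 𝔪 := hI ▸ I.le_radical
  obtain ⟨s, hs⟩ := exists_colonBy_colonBy_pow_eq (M := M) 𝔪
  set H := (⊥ : Submodule R M).colonBy (𝔪 ^ s)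
  have hIH : I ^ s • H = ⊥ :=
    eq_bot_iff.mpr <| (smul_mono_left (Ideal.pow_right_mono hI𝔪 s)).trans smul_colonBy_le
  obtain ⟨N₀, hN₀⟩ := I.exists_pow_smul_top_inf_eq_bot hIH
  obtain ⟨a, ha, hreg⟩ := exists_mem_isSMulRegular_of_forall_not_le fun p hp =>
    not_le_of_mem_associatedPrimes_of_colonBy_bot_eq_bot hI (colonBy_bot_quotient_eq_bot hs.le) hp
  obtain ⟨N₁, hN₁⟩ := I.exists_colonBy_pow_succ_le_of_isSMulRegular hI𝔪 ha hreg
  refine ⟨max N₀ N₁, fun n hn => ?_⟩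
  have hsup : (I ^ (n + 1) • ⊤ : Submodule R M).colonBy 𝔪 ≤ I ^ n • ⊤ ⊔ H := by
    have h := comap_mono (f := H.mkQ) (hN₁ n (le_of_max_le_right hn))
    rw [comap_colonBy, comap_mkQ_smul_top, comap_mkQ_smul_top] at h
    exact (colonBy_mono le_sup_left).trans h
  calc (I ^ (n + 1) • ⊤ : Submodule R M).colonBy 𝔪
      ≤ (I ^ n • ⊤ : Submodule R M).colonBy 𝔪 ⊓ (I ^ n • ⊤ ⊔ H) :=
        le_inf (colonBy_mono (I.antitone_pow_smul_top n.le_succ)) hsup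
    _ ≤ I ^ n • ⊤ ⊔ (I ^ n • ⊤ ⊓ H).colonBy 𝔪 := colonBy_inf_sup_le _ _
    _ = I ^ n • ⊤ ⊔ (⊥ : Submodule R M).colonBy 𝔪 := by rw [hN₀ n (le_of_max_le_left hn)]

end LocalRing

/-- Eventually `ℓ((I^{n+1}M :_M 𝔪)/I^{n+1}M) ≤ ℓ(I^n M/I^{n+1}M) + ℓ(0 :_M 𝔪)`. -/
theorem statement10 {R M : Type*} [CommRing R] [IsNoetherianRing R] [IsLocalRing R]
    [AddCommGroup M] [Module R M] [Module.Finite R M]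
    (I : Ideal R) (hI : I.radical = maximalIdeal R) :
    ∃ N : ℕ, ∀ n ≥ N,
      moduleLength R ↥(Submodule.map (I ^ (n + 1) • ⊤ : Submodule R M).mkQ
          ((I ^ (n + 1) • ⊤ : Submodule R M).colonBy (maximalIdeal R)))
        ≤ moduleLength R ↥(Submodule.map (I ^ (n + 1) • ⊤ : Submodule R M).mkQ
            (I ^ n • ⊤ : Submodule R M))
          + moduleLength R ↥((⊥ : Submodule R M).colonBy (maximalIdeal R)) := by
  obtain ⟨N, hN⟩ := exists_colonBy_pow_succ_le_sup_socle (M := M) hI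
  refine ⟨N, fun n hn => ?_⟩
  simp only [moduleLength_eq_length]
  exact length_map_le_add_of_le_sup _ (hN n hn)
end

section
/- Let (R, m) be a Noetherian local ring, I an m-primary ideal, and M a finitely generated R-module. Then there exists a positive integer k such that for all n ≥ k, (I^{n+1}M :_M m) ∩ I^n M = I^{n+1−k} • (I^k M :_M m); moreover for such n there is an R-module isomorphism (I^{n+1}M :_M m)/[(I^{n+1}M :_M m) ∩ I^n M] ≅ (0 :_M m). -/
open IsLocalRing Submodule

namespace SocleAux

variable {R : Type*} [CommRing R]

section Basic

variable {X : Type*} [AddCommGroup X] [Module R X]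

lemma mem_colonBy {N : Submodule R X} {J : Ideal R} {x : X} :
    x ∈ N.colonBy J ↔ ∀ r ∈ J, r • x ∈ N := Iff.rfl

lemma colonBy_mono {N N' : Submodule R X} (h : N ≤ N') (J : Ideal R) :
    N.colonBy J ≤ N'.colonBy J := fun _ hx r hr => h (hx r hr)

lemma le_colonBy (N : Submodule R X) (J : Ideal R) : N ≤ N.colonBy J :=
  fun x hx r _ => N.smul_mem r hx

lemma smul_colonBy_le {I J : Ideal R} (hIJ : I ≤ J) (N : Submodule R X) :
    I • N.colonBy J ≤ N :=
  Submodule.smul_le.2 fun r hr _ hx => hx r (hIJ hr)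

lemma pow_smul_colonBy (I J : Ideal R) (a b : ℕ) :
    I ^ a • ((I ^ b • ⊤ : Submodule R X).colonBy J) ≤ (I ^ (a + b) • ⊤ : Submodule R X).colonBy J := by
  rw [Submodule.smul_le]
  intro r hr x hx u hu
  rw [mem_colonBy] at hx
  have h2 : r • u • x ∈ I ^ a • (I ^ b • (⊤ : Submodule R X)) :=
    Submodule.smul_mem_smul hr (hx u hu)
  rw [← mul_smul, ← pow_add] at h2
  rw [smul_comm]
  exact h2

lemma map_colonBy {Y : Type*} [AddCommGroup Y] [Module R Y]
    (e : X ≃ₗ[R] Y) (N : Submodule R X) (J : Ideal R) :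
    (N.colonBy J).map (e : X →ₗ[R] Y) = (N.map (e : X →ₗ[R] Y)).colonBy J := by
  ext y
  simp only [Submodule.mem_map, mem_colonBy]
  constructor
  · rintro ⟨x, hx, rfl⟩ r hr
    exact ⟨r • x, hx r hr, map_smul _ _ _⟩
  · intro h
    refine ⟨e.symm y, fun r hr => ?_, by simp⟩
    obtain ⟨x, hx, hxe⟩ := h r hr
    have hx' : x = e.symm (r • y) := by rw [← hxe]; simp
    have : r • e.symm y = e.symm (r • y) := by simp
    rw [this, ← hx']
    exact hx

end Basic

section Transfer

variable [IsNoetherianRing R] {X : Type*} [AddCommGroup X] [Module R X] [Module.Finite R X]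

lemma transfer_AR (I : Ideal R) (N : Submodule R X) :
    ∃ c, ∀ n ≥ c, (I ^ n • ⊤ : Submodule R X) ⊓ N
      = I ^ (n - c) • ((I ^ c • ⊤ : Submodule R X) ⊓ N) := by
  obtain ⟨m, f, hf⟩ := Module.Finite.exists_fin' R X
  haveI : Module.Finite R ((Fin m → R) ⧸ LinearMap.ker f) := by
    exact Module.Finite.of_surjective (LinearMap.ker f).mkQ (Submodule.mkQ_surjective _)
  let e : ((Fin m → R) ⧸ LinearMap.ker f) ≃ₗ[R] X := f.quotKerEquivOfSurjective hf
  obtain ⟨c, hc⟩ := Ideal.exists_pow_inf_eq_pow_smul I (N.comap e.toLinearMap)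
  refine ⟨c, fun n hn => ?_⟩
  have h := congrArg (Submodule.map e.toLinearMap) (hc n hn)
  simp only [Submodule.map_smul'', Submodule.map_inf e.toLinearMap e.injective,
    Submodule.map_top, LinearEquiv.range, Submodule.map_comap_eq, top_inf_eq] at h
  exact h

end Transfer

section SameUniverse

universe u
variable {R : Type u} [CommRing R] (I J : Ideal R)
variable {X : Type u} [AddCommGroup X] [Module R X]

/-- The filtration `j ↦ (I^(j+e) M :_M J)`. -/
def colonFiltration (e : ℕ) : Ideal.Filtration I X where
  N j := ((I ^ (j + e) • ⊤ : Submodule R X).colonBy J)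
  mono j := colonBy_mono (smul_mono_left (Ideal.pow_le_pow_right (by omega))) J
  smul_le j := by
    rw [Submodule.smul_le]
    intro r hr x hx u hu
    have h2 : r • u • x ∈ I • (I ^ (j + e) • (⊤ : Submodule R X)) :=
      Submodule.smul_mem_smul hr (hx u hu)
    rw [← mul_smul, ← pow_succ'] at h2
    have he : j + e + 1 = j + 1 + e := by omega
    rw [he] at h2
    rw [smul_comm]
    exact h2

lemma stab₀ [IsNoetherianRing R] [Module.Finite R X] (e : ℕ) : ∃ k₀, ∀ n ≥ k₀,
    ((I ^ n • ⊤ : Submodule R X) ⊓ (I ^ (n + e) • ⊤ : Submodule R X).colonBy J)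
      = I ^ (n - k₀) • ((I ^ k₀ • ⊤ : Submodule R X) ⊓ (I ^ (k₀ + e) • ⊤ : Submodule R X).colonBy J) := by
  have hst := (Ideal.stableFiltration_stable I (⊤ : Submodule R X)).inter_right
    (F' := colonFiltration I J e)
  obtain ⟨k₀, hk⟩ := hst.exists_pow_smul_eq_of_ge
  exact ⟨k₀, fun n hn => hk n hn⟩

end SameUniverse

section Transfer2

variable [IsNoetherianRing R] {X : Type*} [AddCommGroup X] [Module R X] [Module.Finite R X]

lemma transfer_stab (I J : Ideal R) (e : ℕ) : ∃ k₀, ∀ n ≥ k₀,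
    ((I ^ n • ⊤ : Submodule R X) ⊓ (I ^ (n + e) • ⊤ : Submodule R X).colonBy J)
      = I ^ (n - k₀) • ((I ^ k₀ • ⊤ : Submodule R X) ⊓ (I ^ (k₀ + e) • ⊤ : Submodule R X).colonBy J) := by
  obtain ⟨m, f, hf⟩ := Module.Finite.exists_fin' R X
  haveI : Module.Finite R ((Fin m → R) ⧸ LinearMap.ker f) := by
    exact Module.Finite.of_surjective (LinearMap.ker f).mkQ (Submodule.mkQ_surjective _)
  let e' : ((Fin m → R) ⧸ LinearMap.ker f) ≃ₗ[R] X := f.quotKerEquivOfSurjective hf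
  obtain ⟨k₀, hk⟩ := stab₀ I J (X := (Fin m → R) ⧸ LinearMap.ker f) e
  refine ⟨k₀, fun n hn => ?_⟩
  have h := congrArg (Submodule.map e'.toLinearMap) (hk n hn)
  simp only [Submodule.map_smul'', Submodule.map_inf e'.toLinearMap e'.injective,
    map_colonBy e', Submodule.map_top, LinearEquiv.range] at h
  exact h

end Transfer2

section Mid

variable [IsNoetherianRing R] {X : Type*} [AddCommGroup X] [Module R X] [Module.Finite R X]
variable {I J : Ideal R}

lemma colon_two_le (I J : Ideal R) (hIJ : I ≤ J) :
    ∃ d, ∀ j ≥ d, ((I ^ j • ⊤ : Submodule R X) ⊓ (I ^ (j + 2) • ⊤ : Submodule R X).colonBy J)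
      ≤ I ^ (j + 1) • ⊤ := by
  obtain ⟨k₀, hk⟩ := transfer_stab (X := X) I J 2
  refine ⟨k₀ + 1, fun j hj => ?_⟩
  rw [hk j (by omega)]
  obtain ⟨t, rfl⟩ : ∃ t, j = k₀ + 1 + t := ⟨j - (k₀ + 1), by omega⟩
  have h1 : k₀ + 1 + t - k₀ = t + 1 := by omega
  rw [h1]
  calc I ^ (t + 1) • ((I ^ k₀ • ⊤ : Submodule R X) ⊓ (I ^ (k₀ + 2) • ⊤ : Submodule R X).colonBy J)
      ≤ I ^ (t + 1) • ((I ^ (k₀ + 2) • ⊤ : Submodule R X).colonBy J) :=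
        smul_mono_right _ inf_le_right
    _ = I ^ t • (I • ((I ^ (k₀ + 2) • ⊤ : Submodule R X).colonBy J)) := by
        rw [← mul_smul, ← pow_succ]
    _ ≤ I ^ t • (I ^ (k₀ + 2) • ⊤ : Submodule R X) :=
        smul_mono_right _ (smul_colonBy_le hIJ _)
    _ ≤ I ^ (k₀ + 1 + t + 1) • ⊤ := by
        rw [← mul_smul, ← pow_add]
        have : t + (k₀ + 2) = k₀ + 1 + t + 1 := by omega
        rw [this]

lemma colon_chain (I J : Ideal R) (hIJ : I ≤ J) :
    ∃ d, ∀ n ≥ d, ((I ^ d • ⊤ : Submodule R X) ⊓ (I ^ (n + 1) • ⊤ : Submodule R X).colonBy J)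
      ≤ I ^ n • ⊤ := by
  obtain ⟨d, hd⟩ := colon_two_le (X := X) I J hIJ
  refine ⟨d, fun n hn => ?_⟩
  have key : ∀ j, d ≤ j → j ≤ n →
      ((I ^ d • ⊤ : Submodule R X) ⊓ (I ^ (n + 1) • ⊤ : Submodule R X).colonBy J) ≤ I ^ j • ⊤ := by
    intro j hdj
    induction j, hdj using Nat.le_induction with
    | base => exact fun _ => inf_le_left
    | succ j hj IH =>
      intro hjn
      have hA : ((I ^ d • ⊤ : Submodule R X) ⊓ (I ^ (n + 1) • ⊤ : Submodule R X).colonBy J)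
          ≤ (I ^ j • ⊤ : Submodule R X) ⊓ (I ^ (j + 2) • ⊤ : Submodule R X).colonBy J := by
        refine le_inf (IH (by omega)) (le_trans inf_le_right (colonBy_mono ?_ J))
        exact smul_mono_left (Ideal.pow_le_pow_right (by omega))
      exact le_trans hA (hd j hj)
  exact key n hn le_rfl

lemma colon_le_of_regular (I : Ideal R) {r : R} (hr : r ∈ J) (hreg : IsSMulRegular X r) :
    ∃ c, ∀ n ≥ c, ((I ^ (n + 1) • ⊤ : Submodule R X).colonBy J) ≤ I ^ (n + 1 - c) • ⊤ := by
  obtain ⟨c, hc⟩ := transfer_AR I (LinearMap.range (LinearMap.lsmul R X r))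
  refine ⟨c, fun n hn x hx => ?_⟩
  have h1 : r • x ∈ (I ^ (n + 1) • ⊤ : Submodule R X) ⊓ LinearMap.range (LinearMap.lsmul R X r) :=
    ⟨hx r hr, ⟨x, rfl⟩⟩
  rw [hc (n + 1) (by omega)] at h1
  have h2 : I ^ (n + 1 - c) • ((I ^ c • ⊤ : Submodule R X) ⊓ LinearMap.range (LinearMap.lsmul R X r))
      ≤ I ^ (n + 1 - c) • LinearMap.range (LinearMap.lsmul R X r) :=
    smul_mono_right _ inf_le_right
  have h3 : r • x ∈ I ^ (n + 1 - c) • LinearMap.range (LinearMap.lsmul R X r) := h2 h1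
  rw [LinearMap.range_eq_map, ← Submodule.map_smul''] at h3
  obtain ⟨y, hy, hyx⟩ := h3
  have hxy : y = x := hreg (by simpa using hyx)
  rwa [← hxy]

lemma inter_bot_of_pow_kill (I : Ideal R) {S : Submodule R X} {s₀ : ℕ}
    (hbot : I ^ s₀ • S = ⊥) :
    ∃ c, ∀ n ≥ c, (I ^ n • ⊤ : Submodule R X) ⊓ S = ⊥ := by
  obtain ⟨c, hc⟩ := transfer_AR I S
  refine ⟨c + s₀, fun n hn => le_bot_iff.1 ?_⟩
  rw [hc n (by omega)]
  calc I ^ (n - c) • ((I ^ c • ⊤ : Submodule R X) ⊓ S) ≤ I ^ (n - c) • S :=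
        smul_mono_right _ inf_le_right
    _ = I ^ (n - c - s₀) • (I ^ s₀ • S) := by
        rw [← mul_smul, ← pow_add]
        have : n - c - s₀ + s₀ = n - c := by omega
        rw [this]
    _ = ⊥ := by rw [hbot, Submodule.smul_bot]

end Mid

section Ass

variable {X : Type*} [AddCommGroup X] [Module R X]

lemma assSub [IsNoetherianRing R] (K : Submodule R X) {Q : Ideal R} (hQ : IsAssociatedPrime Q X) :
    IsAssociatedPrime Q ↥K ∨ IsAssociatedPrime Q (X ⧸ K) := by
  obtain ⟨hp, x, hx⟩ := isAssociatedPrime_iff.mp hQ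
  by_cases hc : ∃ r, r ∉ Q ∧ r • x ∈ K
  · obtain ⟨r, hrQ, hrK⟩ := hc
    left
    refine isAssociatedPrime_iff.mpr ⟨hp, ⟨⟨r • x, hrK⟩, ?_⟩⟩
    ext s
    rw [Submodule.mem_colon_singleton, Submodule.mem_bot, ← ZeroMemClass.coe_eq_zero,
      SetLike.val_smul]
    have h1 : s • r • x = (s * r) • x := (mul_smul s r x).symm
    rw [h1]
    have h2 : ((s * r) • x = 0) ↔ s * r ∈ Q := by
      rw [hx]
      rw [Submodule.mem_colon_singleton, Submodule.mem_bot]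
    rw [h2]
    constructor
    · exact fun hs => Q.mul_mem_right r hs
    · intro hsr
      rcases hp.mem_or_mem hsr with h | h
      · exact h
      · exact absurd h hrQ
  · right
    push_neg at hc
    refine isAssociatedPrime_iff.mpr ⟨hp, K.mkQ x, ?_⟩
    ext s
    rw [Submodule.mem_colon_singleton, Submodule.mem_bot, ← map_smul, Submodule.mkQ_apply,
      Submodule.Quotient.mk_eq_zero]
    constructor
    · intro hs
      have hs0 : s • x = 0 := by
        have h3 : s ∈ (⊥ : Submodule R X).colon {x} := hx ▸ hs
        rwa [Submodule.mem_colon_singleton, Submodule.mem_bot] at h3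
      rw [hs0]; exact K.zero_mem
    · intro hs
      by_contra hsQ
      exact hc s hsQ hs

lemma assFinite [IsNoetherianRing R] (X : Type*) [AddCommGroup X] [Module R X]
    [Module.Finite R X] : (associatedPrimes R X).Finite := by
  have key : ∀ N : Submodule R X, (associatedPrimes R (X ⧸ N)).Finite := by
    have wf : WellFounded ((· > ·) : Submodule R X → Submodule R X → Prop) :=
      (isNoetherian_iff (R := R) (M := X)).mp inferInstance
    intro N
    refine WellFounded.induction wf
      (C := fun N => (associatedPrimes R (X ⧸ N)).Finite) N (fun N IH => ?_)
    show (associatedPrimes R (X ⧸ N)).Finite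
    by_cases hsub : Subsingleton (X ⧸ N)
    · rw [associatedPrimes.eq_empty_of_subsingleton]
      exact Set.finite_empty
    haveI : Nontrivial (X ⧸ N) := not_subsingleton_iff_nontrivial.mp hsub
    obtain ⟨P₁, hP₁⟩ := associatedPrimes.nonempty R (X ⧸ N)
    obtain ⟨hp1, xb, hxb⟩ := isAssociatedPrime_iff.mp hP₁
    obtain ⟨x, rfl⟩ := Submodule.mkQ_surjective N xb
    set K : Submodule R (X ⧸ N) := R ∙ (N.mkQ x) with hK
    have hxK : N.mkQ x ∈ K := Submodule.mem_span_singleton_self _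
    have hNle : N ≤ K.comap N.mkQ := by
      intro y hy
      rw [Submodule.mem_comap, Submodule.mkQ_apply, (Submodule.Quotient.mk_eq_zero N).mpr hy]
      exact K.zero_mem
    have hmk0 : N.mkQ x ≠ 0 := by
      intro h0
      apply hp1.ne_top
      rw [hxb, h0, eq_top_iff]; intro r _
      rw [Submodule.mem_colon_singleton, smul_zero]; exact Submodule.zero_mem _
    have hxnotN : x ∉ N := fun hxN => hmk0 (by
      rw [Submodule.mkQ_apply, (Submodule.Quotient.mk_eq_zero N)]
      exact hxN)
    have hlt : N < K.comap N.mkQ :=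
      lt_of_le_not_ge hNle (fun h' => hxnotN (h' (Submodule.mem_comap.mpr hxK)))
    have hfin' := IH _ hlt
    have hmap : (K.comap N.mkQ).map N.mkQ = K := by
      rw [Submodule.map_comap_eq, Submodule.range_mkQ, top_inf_eq]
    have e2 : ((X ⧸ N) ⧸ K) ≃ₗ[R] (X ⧸ (K.comap N.mkQ)) :=
      (Submodule.quotEquivOfEq _ _ hmap.symm).trans
        (Submodule.quotientQuotientEquivQuotient N (K.comap N.mkQ) hNle)
    have hker : LinearMap.ker (LinearMap.toSpanSingleton R (X ⧸ N) (N.mkQ x)) = P₁ := by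
      ext r
      rw [LinearMap.mem_ker, LinearMap.toSpanSingleton_apply, hxb,
        Submodule.mem_colon_singleton, Submodule.mem_bot]
    have hrange : LinearMap.range (LinearMap.toSpanSingleton R (X ⧸ N) (N.mkQ x)) = K :=
      (LinearMap.span_singleton_eq_range R _ _).symm
    have e1 : (R ⧸ P₁) ≃ₗ[R] ↥K :=
      (Submodule.quotEquivOfEq P₁ _ hker.symm).trans
        (((LinearMap.toSpanSingleton R (X ⧸ N) (N.mkQ x)).quotKerEquivRange).trans
          (LinearEquiv.ofEq _ _ hrange))
    have hsubset : associatedPrimes R (X ⧸ N)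
        ⊆ insert P₁ (associatedPrimes R (X ⧸ K.comap N.mkQ)) := by
      intro Q hQ
      rcases assSub K hQ with h | h
      · left
        have hQ' : IsAssociatedPrime Q (R ⧸ P₁) := (e1.isAssociatedPrime_iff).mpr h
        rw [IsAssociatedPrime.eq_radical hp1.isPrimary hQ', hp1.radical]
      · right
        exact (e2.isAssociatedPrime_iff).mp h
    exact (hfin'.insert P₁).subset hsubset
  have e0 : (X ⧸ (⊥ : Submodule R X)) ≃ₗ[R] X := Submodule.quotEquivOfEqBot ⊥ rfl
  exact (LinearEquiv.AssociatedPrimes.eq e0) ▸ key ⊥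

lemma exists_reg [IsNoetherianRing R] [IsLocalRing R] [Module.Finite R X]
    (hsoc : ((⊥ : Submodule R X).colonBy (maximalIdeal R)) = ⊥) :
    ∃ r ∈ maximalIdeal R, IsSMulRegular X r := by
  rcases subsingleton_or_nontrivial X with h | h
  · exact ⟨0, zero_mem _, fun a b _ => Subsingleton.elim a b⟩
  by_contra hcon
  push_neg at hcon
  have hfin := assFinite (R := R) X
  classical
  have hsub : (maximalIdeal R : Set R) ⊆ ⋃ p ∈ ((hfin.toFinset : Finset (Ideal R)) : Set (Ideal R)), (p : Set R) := by
    intro r hr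
    have h1 : r ∈ (⋃ p ∈ associatedPrimes R X, (p : Set R)) := by
      rw [biUnion_associatedPrimes_eq_compl_regular R X]
      exact hcon r hr
    obtain ⟨p, hpA, hrp⟩ : ∃ p ∈ associatedPrimes R X, r ∈ (p : Set R) := by
      simpa using h1
    exact Set.mem_biUnion (by simpa [Set.Finite.mem_toFinset] using hpA) hrp
  have hprime : ∀ p ∈ hfin.toFinset, p ≠ ⊥ → p ≠ ⊥ → Ideal.IsPrime p := by
    intro p hp _ _
    exact (((Set.Finite.mem_toFinset hfin).mp hp) : IsAssociatedPrime p X).isPrime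
  obtain ⟨p, hps, hmp⟩ := (Ideal.subset_union_prime (⊥ : Ideal R) (⊥ : Ideal R) hprime).mp hsub
  have hpA : IsAssociatedPrime p X := (Set.Finite.mem_toFinset hfin).mp hps
  have hpm : p = maximalIdeal R :=
    le_antisymm (IsLocalRing.le_maximalIdeal hpA.isPrime.ne_top) hmp
  obtain ⟨hpprime, x, hxann⟩ := isAssociatedPrime_iff.mp hpA
  have hx0 : x ≠ 0 := by
    rintro rfl
    apply hpprime.ne_top
    rw [hxann, eq_top_iff]; intro r _
    rw [Submodule.mem_colon_singleton, smul_zero]; exact Submodule.zero_mem _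
  have hxsoc : x ∈ ((⊥ : Submodule R X).colonBy (maximalIdeal R)) := by
    intro r hr
    have : r ∈ p := hpm ▸ hr
    rw [hxann, Submodule.mem_colon_singleton, Submodule.mem_bot] at this
    rw [this]
    exact Submodule.zero_mem ⊥
  rw [hsoc] at hxsoc
  exact hx0 hxsoc

end Ass

section Main2

variable [IsNoetherianRing R] [IsLocalRing R]
variable {X : Type*} [AddCommGroup X] [Module R X] [Module.Finite R X]

lemma colon_le_pow_of_socle_bot {I : Ideal R} (hIm : I ≤ maximalIdeal R)
    (hsoc : ((⊥ : Submodule R X).colonBy (maximalIdeal R)) = ⊥) :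
    ∃ n₁, ∀ n ≥ n₁,
      ((I ^ (n + 1) • ⊤ : Submodule R X).colonBy (maximalIdeal R)) ≤ I ^ n • ⊤ := by
  obtain ⟨r, hrm, hreg⟩ := exists_reg (X := X) hsoc
  obtain ⟨c, hc⟩ := colon_le_of_regular (X := X) (J := maximalIdeal R) I hrm hreg
  obtain ⟨d, hd⟩ := colon_chain (X := X) I (maximalIdeal R) hIm
  refine ⟨c + d, fun n hn => ?_⟩
  have h1 := hc n (by omega)
  have h2 : (I ^ (n + 1 - c) • ⊤ : Submodule R X) ≤ I ^ d • ⊤ :=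
    smul_mono_left (Ideal.pow_le_pow_right (by omega))
  exact le_trans (le_inf (h1.trans h2) le_rfl) (hd n (by omega))

end Main2

end SocleAux

open SocleAux in
/-- There is `k ≥ 1` such that for every `n ≥ k`,
`(I^{n+1}M :_M 𝔪) ∩ I^n M = I^{n+1-k}(I^k M :_M 𝔪)` and
`(I^{n+1}M :_M 𝔪)/[(I^{n+1}M :_M 𝔪) ∩ I^n M] ≅ (0 :_M 𝔪)`. -/
theorem statement11 {R M : Type*} [CommRing R] [IsNoetherianRing R] [IsLocalRing R]
    [AddCommGroup M] [Module R M] [Module.Finite R M]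
    (I : Ideal R) (hI : I.radical = maximalIdeal R) :
    ∃ k : ℕ, 0 < k ∧ ∀ n ≥ k,
      ((I ^ (n + 1) • ⊤ : Submodule R M).colonBy (maximalIdeal R) ⊓ (I ^ n • ⊤)
        = I ^ (n + 1 - k) • ((I ^ k • ⊤ : Submodule R M).colonBy (maximalIdeal R))) ∧
      Nonempty (
        (↥((I ^ (n + 1) • ⊤ : Submodule R M).colonBy (maximalIdeal R)) ⧸
          (Submodule.comap
            ((I ^ (n + 1) • ⊤ : Submodule R M).colonBy (maximalIdeal R)).subtype
            ((I ^ (n + 1) • ⊤ : Submodule R M).colonBy (maximalIdeal R) ⊓ (I ^ n • ⊤))))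
        ≃ₗ[R] ↥((⊥ : Submodule R M).colonBy (maximalIdeal R))) := by
  classical
  have hIm : I ≤ maximalIdeal R := hI ▸ Ideal.le_radical
  haveI : IsNoetherian R M := inferInstance
  -- the 𝔪-torsion submodule H and its stabilization exponent s
  let Hfun : ℕ →o Submodule R M :=
    ⟨fun t => (⊥ : Submodule R M).colonBy ((maximalIdeal R) ^ t),
      fun a b hab x hx r hr => hx r (Ideal.pow_le_pow_right hab hr)⟩
  obtain ⟨s, hs⟩ := monotone_stabilizes_iff_noetherian.mpr
    (inferInstance : IsNoetherian R M) Hfun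
  set H : Submodule R M := (⊥ : Submodule R M).colonBy ((maximalIdeal R) ^ s) with hH
  set Soc : Submodule R M := (⊥ : Submodule R M).colonBy (maximalIdeal R) with hSoc
  have hIsH : I ^ s • H = ⊥ := by
    rw [eq_bot_iff]
    exact Submodule.smul_le.2 fun r hr x hx => hx r (Ideal.pow_right_mono hIm s hr)
  have hISoc : I ^ 1 • Soc = ⊥ := by
    rw [eq_bot_iff, pow_one]
    exact Submodule.smul_le.2 fun r hr x hx => hx r (hIm hr)
  -- the quotient M' = M / H has trivial socle
  haveI : Module.Finite R (M ⧸ H) := by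
    exact Module.Finite.of_surjective H.mkQ (Submodule.mkQ_surjective _)
  have hsoc' : ((⊥ : Submodule R (M ⧸ H)).colonBy (maximalIdeal R)) = ⊥ := by
    rw [eq_bot_iff]
    intro z hz
    obtain ⟨x, rfl⟩ := Submodule.mkQ_surjective H z
    rw [Submodule.mem_bot, Submodule.mkQ_apply, Submodule.Quotient.mk_eq_zero]
    have hann : (maximalIdeal R) ^ (s + 1) ≤ (R ∙ x).annihilator := by
      rw [pow_succ, Ideal.mul_le]
      intro r hr u hu
      rw [Submodule.mem_annihilator_span_singleton, mul_smul]
      have hux : u • x ∈ H := by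
        have h1 : u • H.mkQ x ∈ (⊥ : Submodule R (M ⧸ H)) := hz u hu
        rw [← map_smul, Submodule.mem_bot, Submodule.mkQ_apply,
          Submodule.Quotient.mk_eq_zero] at h1
        exact h1
      have := hux r hr
      rwa [Submodule.mem_bot] at this
    have hx1 : x ∈ Hfun (s + 1) := by
      intro u hu
      rw [Submodule.mem_bot, ← Submodule.mem_annihilator_span_singleton x u]
      exact hann hu
    rwa [← hs (s + 1) (by omega)] at hx1
  obtain ⟨n₁, hn₁⟩ := colon_le_pow_of_socle_bot (X := M ⧸ H) hIm hsoc'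
  obtain ⟨k₀, hk₀⟩ := transfer_stab (X := M) I (maximalIdeal R) 1
  obtain ⟨cS, hcS⟩ := inter_bot_of_pow_kill (X := M) I hISoc
  obtain ⟨cH, hcH⟩ := inter_bot_of_pow_kill (X := M) I hIsH
  refine ⟨k₀ + n₁ + cS + cH + s + 2, by omega, fun n hn => ?_⟩
  set k : ℕ := k₀ + n₁ + cS + cH + s + 2 with hk
  -- Part 1 : the filtration equality
  constructor
  · apply le_antisymm
    · calc (I ^ (n + 1) • ⊤ : Submodule R M).colonBy (maximalIdeal R) ⊓ (I ^ n • ⊤)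
          = (I ^ n • ⊤ : Submodule R M) ⊓ (I ^ (n + 1) • ⊤ : Submodule R M).colonBy (maximalIdeal R) := by
            rw [inf_comm]
        _ = I ^ (n - k₀) • ((I ^ k₀ • ⊤ : Submodule R M)
              ⊓ (I ^ (k₀ + 1) • ⊤ : Submodule R M).colonBy (maximalIdeal R)) := hk₀ n (by omega)
        _ ≤ I ^ (n - k₀) • ((I ^ (k₀ + 1) • ⊤ : Submodule R M).colonBy (maximalIdeal R)) :=
            smul_mono_right _ inf_le_right
        _ = I ^ (n + 1 - k) • (I ^ (k - k₀ - 1) •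
              ((I ^ (k₀ + 1) • ⊤ : Submodule R M).colonBy (maximalIdeal R))) := by
            rw [← mul_smul, ← pow_add]
            congr 2
            omega
        _ ≤ I ^ (n + 1 - k) • ((I ^ k • ⊤ : Submodule R M).colonBy (maximalIdeal R)) := by
            refine smul_mono_right _ ?_
            have h5 := pow_smul_colonBy (X := M) I (maximalIdeal R) (k - k₀ - 1) (k₀ + 1)
            rwa [show k - k₀ - 1 + (k₀ + 1) = k by omega] at h5
    · apply le_inf
      · have h6 := pow_smul_colonBy (X := M) I (maximalIdeal R) (n + 1 - k) k
        rwa [show n + 1 - k + k = n + 1 by omega] at h6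
      · calc I ^ (n + 1 - k) • ((I ^ k • ⊤ : Submodule R M).colonBy (maximalIdeal R))
            = I ^ (n - k) • (I • ((I ^ k • ⊤ : Submodule R M).colonBy (maximalIdeal R))) := by
              rw [← mul_smul, ← pow_succ, show n - k + 1 = n + 1 - k by omega]
          _ ≤ I ^ (n - k) • (I ^ k • ⊤ : Submodule R M) :=
              smul_mono_right _ (smul_colonBy_le hIm _)
          _ = I ^ n • ⊤ := by rw [← mul_smul, ← pow_add, show n - k + k = n by omega]
  -- Part 2 : the isomorphism
  · have hSle : Soc ≤ (I ^ (n + 1) • ⊤ : Submodule R M).colonBy (maximalIdeal R) :=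
      colonBy_mono bot_le _
    have hdecomp : ∀ x ∈ (I ^ (n + 1) • ⊤ : Submodule R M).colonBy (maximalIdeal R),
        ∃ h ∈ Soc, ∃ y ∈ ((I ^ (n + 1) • ⊤ : Submodule R M).colonBy (maximalIdeal R)
          ⊓ (I ^ n • ⊤)), x = h + y := by
      intro x hx
      have hx' : H.mkQ x ∈ ((I ^ (n + 1) • ⊤ : Submodule R (M ⧸ H)).colonBy (maximalIdeal R)) := by
        intro r hr
        have hmaple : (I ^ (n + 1) • ⊤ : Submodule R M).map H.mkQ
            ≤ (I ^ (n + 1) • ⊤ : Submodule R (M ⧸ H)) := by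
          rw [Submodule.map_smul'', Submodule.map_top, Submodule.range_mkQ]
        have : r • H.mkQ x = H.mkQ (r • x) := (map_smul _ _ _).symm
        rw [this]
        exact hmaple ⟨_, hx r hr, rfl⟩
      have hx'' : H.mkQ x ∈ (I ^ n • ⊤ : Submodule R (M ⧸ H)) := hn₁ n (by omega) hx'
      have hmapeq : (I ^ n • ⊤ : Submodule R (M ⧸ H)) = (I ^ n • ⊤ : Submodule R M).map H.mkQ := by
        rw [Submodule.map_smul'', Submodule.map_top, Submodule.range_mkQ]
      rw [hmapeq] at hx''
      obtain ⟨y₀, hy₀, hyx⟩ := hx''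
      have hxy : x - y₀ ∈ H := by
        rw [← Submodule.Quotient.eq H]
        exact (hyx.symm : H.mkQ x = H.mkQ y₀)
      have hhS : x - y₀ ∈ Soc := by
        intro r hr
        have h2 : r • x ∈ (I ^ n • ⊤ : Submodule R M) :=
          smul_mono_left (Ideal.pow_le_pow_right (by omega)) (hx r hr)
        have h3 : r • y₀ ∈ (I ^ n • ⊤ : Submodule R M) := Submodule.smul_mem _ r hy₀
        have h4 : r • (x - y₀) ∈ (I ^ n • ⊤ : Submodule R M) := by
          rw [smul_sub]; exact sub_mem h2 h3
        have h6 : r • (x - y₀) ∈ (I ^ n • ⊤ : Submodule R M) ⊓ H := ⟨h4, H.smul_mem r hxy⟩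
        rw [hcH n (by omega)] at h6
        exact h6
      refine ⟨x - y₀, hhS, y₀, ⟨?_, hy₀⟩, by abel⟩
      have hhC : x - y₀ ∈ (I ^ (n + 1) • ⊤ : Submodule R M).colonBy (maximalIdeal R) :=
        hSle hhS
      have : y₀ = x - (x - y₀) := by abel
      rw [this]
      exact sub_mem hx hhC
    have hdisj : ∀ z ∈ Soc, z ∈ ((I ^ (n + 1) • ⊤ : Submodule R M).colonBy (maximalIdeal R)
        ⊓ (I ^ n • ⊤)) → z = 0 := by
      intro z hz hz2
      have h7 : z ∈ (I ^ n • ⊤ : Submodule R M) ⊓ Soc := ⟨hz2.2, hz⟩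
      rw [hcS n (by omega)] at h7
      exact h7
    set CC : Submodule R M := (I ^ (n + 1) • ⊤ : Submodule R M).colonBy (maximalIdeal R) with hCC
    set LL : Submodule R ↥CC := Submodule.comap CC.subtype (CC ⊓ (I ^ n • ⊤)) with hLL
    refine ⟨(LinearEquiv.ofBijective (LL.mkQ ∘ₗ Submodule.inclusion hSle) ⟨?_, ?_⟩).symm⟩
    · rw [← LinearMap.ker_eq_bot, eq_bot_iff]
      intro z hz
      rw [LinearMap.mem_ker, LinearMap.comp_apply, Submodule.mkQ_apply,
        Submodule.Quotient.mk_eq_zero] at hz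
      rw [Submodule.mem_bot]
      have hz' : (z : M) ∈ CC ⊓ (I ^ n • ⊤) := hz
      have : (z : M) = 0 := hdisj z z.2 hz'
      exact Subtype.ext this
    · intro q
      obtain ⟨c, rfl⟩ := Submodule.mkQ_surjective LL q
      obtain ⟨h, hh, y, hy, hcy⟩ := hdecomp (c : M) c.2
      refine ⟨⟨h, hh⟩, ?_⟩
      rw [LinearMap.comp_apply, Submodule.mkQ_apply, Submodule.mkQ_apply,
        Submodule.Quotient.eq]
      show (Submodule.inclusion hSle ⟨h, hh⟩ - c : ↥CC) ∈ LL
      rw [hLL, Submodule.mem_comap]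
      have h8 : (CC.subtype) (Submodule.inclusion hSle ⟨h, hh⟩ - c) = -y := by
        rw [map_sub]
        show h - (c : M) = -y
        rw [hcy]; abel
      rw [h8]
      exact neg_mem hy
end
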